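/- arXiv:2502.09153 — 11 statements merged into one kernel-verified Lean document; each statement's English description precedes it below -/
import Mathlib

section
/- For every (finite simple) graph G and every pair of vertices u, v of G, the stress interval S(u,v) is a stress convex set in G; that is, for all x, y ∈ S(u,v), S(x,y) ⊆ S(u,v). -/
/-- The interval `I(u,v)`: vertices lying on some shortest `u,v`-path. -/
def SimpleGraph.interval {V : Type*} (G : SimpleGraph V) (u v : V) : Set V :=
  {x | ∃ p : G.Walk u v, p.IsPath ∧ p.length = G.dist u v ∧ x ∈ p.support}

/-- The stress interval `S(u,v)`: vertices lying on every shortest `u,v`-path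
(empty if `u` and `v` are in different components). -/
def SimpleGraph.stressInterval {V : Type*} (G : SimpleGraph V) (u v : V) : Set V :=
  {x | G.Reachable u v ∧
    ∀ p : G.Walk u v, p.IsPath → p.length = G.dist u v → x ∈ p.support}

/-- A set of vertices is stress convex if it contains the stress interval
between any two of its elements. -/
def SimpleGraph.IsStressConvex {V : Type*} (G : SimpleGraph V) (U : Set V) : Prop :=
  ∀ ⦃u⦄, u ∈ U → ∀ ⦃v⦄, v ∈ U → G.stressInterval u v ⊆ U

/-- Splitting a shortest walk at a vertex gives two shortest walks. -/
lemma split_shortest {V : Type*} [DecidableEq V] (G : SimpleGraph V) {a b : V} (p : G.Walk a b)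
    (hlen : p.length = G.dist a b) {x : V} (hx : x ∈ p.support) :
    (p.takeUntil x hx).length = G.dist a x ∧
    (p.dropUntil x hx).length = G.dist x b := by
  have hsum : (p.takeUntil x hx).length + (p.dropUntil x hx).length = p.length := by
    rw [← SimpleGraph.Walk.length_append, p.take_spec hx]
  have h1 : G.dist a x ≤ (p.takeUntil x hx).length := SimpleGraph.dist_le _
  have h2 : G.dist x b ≤ (p.dropUntil x hx).length := SimpleGraph.dist_le _
  have hr1 : G.Reachable a x := ⟨p.takeUntil x hx⟩
  have hr2 : G.Reachable x b := ⟨p.dropUntil x hx⟩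
  obtain ⟨q1, hq1⟩ := hr1.exists_walk_length_eq_dist
  obtain ⟨q2, hq2⟩ := hr2.exists_walk_length_eq_dist
  have h3 : G.dist a b ≤ G.dist a x + G.dist x b := by
    have := SimpleGraph.dist_le (q1.append q2)
    rwa [SimpleGraph.Walk.length_append, hq1, hq2] at this
  omega

/-- For every finite simple graph `G` and all vertices `u, v`,
the stress interval `S(u,v)` is a stress convex set of `G`. -/
theorem stressInterval_isStressConvex {V : Type*} [Fintype V]
    (G : SimpleGraph V) (u v : V) :
    G.IsStressConvex (G.stressInterval u v) := by
  classical
  rintro x ⟨hruv, hx⟩ y ⟨-, hy⟩ z ⟨hrxy, hz⟩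
  refine ⟨hruv, fun p hp hlen => ?_⟩
  have hxp : x ∈ p.support := hx p hp hlen
  have hyp : y ∈ p.support := hy p hp hlen
  -- split p at x
  obtain ⟨ht, hd⟩ := split_shortest G p hlen hxp
  have hysplit : y ∈ (p.takeUntil x hxp).support ∨ y ∈ (p.dropUntil x hxp).support := by
    have := p.take_spec hxp
    rw [← this, SimpleGraph.Walk.mem_support_append_iff] at hyp
    exact hyp
  cases hysplit with
  | inr hyd =>
    -- segment from x to y inside dropUntil
    set q := p.dropUntil x hxp with hq
    have hqpath : q.IsPath := hp.dropUntil hxp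
    obtain ⟨ht2, _⟩ := split_shortest G q hd hyd
    have hr : (q.takeUntil y hyd).IsPath := hqpath.takeUntil hyd
    have hzq : z ∈ (q.takeUntil y hyd).support := hz _ hr ht2
    exact SimpleGraph.Walk.support_dropUntil_subset p hxp
      (SimpleGraph.Walk.support_takeUntil_subset q hyd hzq)
  | inl hyt =>
    -- y comes before x : segment from y to x, reversed
    set q := p.takeUntil x hxp with hq
    have hqpath : q.IsPath := hp.takeUntil hxp
    obtain ⟨_, hd2⟩ := split_shortest G q ht hyt
    have hr : (q.dropUntil y hyt).IsPath := hqpath.dropUntil hyt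
    have hrev : ((q.dropUntil y hyt).reverse).IsPath := hr.reverse
    have hlenrev : ((q.dropUntil y hyt).reverse).length = G.dist x y := by
      rw [SimpleGraph.Walk.length_reverse, hd2, SimpleGraph.dist_comm]
    have hzq : z ∈ ((q.dropUntil y hyt).reverse).support := hz _ hrev hlenrev
    rw [SimpleGraph.Walk.support_reverse, List.mem_reverse] at hzq
    exact SimpleGraph.Walk.support_takeUntil_subset p hxp
      (SimpleGraph.Walk.support_dropUntil_subset q hyt hzq)
end

section
/- Let G be a connected finite simple graph and let u and v be distinct vertices of G. Then S(u,v) = {u,v} if and only if either uv is an edge of G or there exist two internally disjoint shortest u,v-paths in G (that is, two shortest u,v-paths whose vertex sets intersect only in {u,v}). -/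
/-!
On a geodesic from `u` the `k`-th vertex is at distance `k` from `u`, so two geodesics can only
meet at equal steps. If no interior vertex lies on all geodesics, two geodesics are separated one
step at a time: when they first meet, at `c`, take a geodesic `r` avoiding `c` and reroute along
`r` whichever of the two `r` touched last before `c`.
-/

namespace SimpleGraph

variable {V : Type*} {G : SimpleGraph V} {u v : V}

lemma Walk.dist_getVert_of_length_eq_dist {p : G.Walk u v} (hp : p.length = G.dist u v)
    {k : ℕ} (hk : k ≤ p.length) : G.dist u (p.getVert k) = k := by
  rw [← length_eq_dist_of_subwalk hp (p.isSubwalk_take k), take_length]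
  omega

lemma Walk.exists_splice (p q : G.Walk u v) {l : ℕ} (hl : l ≤ p.length)
    (h : p.getVert l = q.getVert l) :
    ∃ r : G.Walk u v, r.length = l + (q.length - l) ∧
      ∀ k, r.getVert k = if k ≤ l then p.getVert k else q.getVert k := by
  refine ⟨(p.take l).append ((q.drop l).copy h.symm rfl), ?_, fun k => ?_⟩
  · rw [length_append, take_length, length_copy, drop_length, min_eq_left hl]
  rw [getVert_append', take_length, min_eq_left hl]
  split_ifs with hk
  · rw [take_getVert, min_eq_right hk]
  · rw [getVert_copy, drop_getVert, Nat.add_sub_cancel' (by omega)]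

lemma pair_subset_stressInterval (hr : G.Reachable u v) : {u, v} ⊆ G.stressInterval u v := by
  rintro x (rfl | rfl)
  · exact ⟨hr, fun p _ _ => p.start_mem_support⟩
  · exact ⟨hr, fun p _ _ => p.end_mem_support⟩

lemma stressInterval_subset_of_adj (h : G.Adj u v) : G.stressInterval u v ⊆ {u, v} := by
  intro x hx
  simpa using hx.2 (.cons h .nil) (by simp [h.ne]) (by simp [dist_eq_one_iff_adj.mpr h])

lemma exists_geodesic_getVert_not_mem_support (hr : G.Reachable u v)
    (hS : G.stressInterval u v ⊆ {u, v}) {p : G.Walk u v} (hp : p.length = G.dist u v) {k : ℕ}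
    (hk : 0 < k) (hkd : k < G.dist u v) :
    ∃ r : G.Walk u v, r.length = G.dist u v ∧ p.getVert k ∉ r.support := by
  have hdk : G.dist u (p.getVert k) = k := p.dist_getVert_of_length_eq_dist hp (by omega)
  have hkS : p.getVert k ∉ G.stressInterval u v := by
    intro h
    rcases hS h with h | h <;> rw [h] at hdk
    · simp at hdk
      omega
    · omega
  simp only [stressInterval, Set.mem_ofPred_eq, hr, true_and, not_forall] at hkS
  obtain ⟨r, -, hrd, hkr⟩ := hkS
  exact ⟨r, hrd, hkr⟩

lemma exists_getVert_ne_of_reroute {p q r : G.Walk u v} (hp : p.length = G.dist u v)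
    (hr : r.length = G.dist u v) {i j l : ℕ} (hli : l ≤ i) (hlp : l ≤ p.length)
    (hpq : ∀ k, 0 < k → k ≤ i → p.getVert k ≠ q.getVert k) (hl : p.getVert l = r.getVert l)
    (hrq : ∀ k, l < k → k ≤ j → r.getVert k ≠ q.getVert k) :
    ∃ p' : G.Walk u v, p'.length = G.dist u v ∧
      ∀ k, 0 < k → k ≤ j → p'.getVert k ≠ q.getVert k := by
  obtain ⟨p', hlen, hget⟩ := p.exists_splice r hlp hl
  refine ⟨p', by omega, fun k hk hki => ?_⟩
  rw [hget]
  split_ifs with hkl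
  exacts [hpq k hk (by omega), hrq k (by omega) hki]

lemma exists_geodesics_getVert_ne (hr : G.Reachable u v)
    (hS : G.stressInterval u v ⊆ {u, v}) :
    ∀ i < G.dist u v, ∃ p q : G.Walk u v, p.length = G.dist u v ∧ q.length = G.dist u v ∧
      ∀ k, 0 < k → k ≤ i → p.getVert k ≠ q.getVert k := by
  intro i
  induction i with
  | zero =>
    obtain ⟨p, hp⟩ := hr.exists_walk_length_eq_dist
    exact fun _ => ⟨p, p, hp, hp, fun k hk hk0 => by omega⟩
  | succ i ih =>
    intro hi
    obtain ⟨p, q, hp, hq, hpq⟩ := ih (by omega)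
    by_cases hc : p.getVert (i + 1) ≠ q.getVert (i + 1)
    · refine ⟨p, q, hp, hq, fun k hk hki => ?_⟩
      rcases Nat.lt_or_eq_of_le hki with hki | rfl
      exacts [hpq k hk (by omega), hc]
    push Not at hc
    obtain ⟨r, hrd, hcr⟩ := exists_geodesic_getVert_not_mem_support hr hS hp
      (Nat.succ_pos i) hi
    classical
    let meets k := p.getVert k = r.getVert k ∨ q.getVert k = r.getVert k
    obtain ⟨l, hli, hl, hlast⟩ : ∃ l ≤ i, meets l ∧ ∀ k, l < k → k ≤ i → ¬meets k :=
      ⟨_, Nat.findGreatest_le i,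
        Nat.findGreatest_spec (P := meets) (Nat.zero_le i) (by simp [meets]),
        fun k => Nat.findGreatest_is_greatest⟩
    have hmiss : ∀ k, l < k → k ≤ i + 1 →
        r.getVert k ≠ p.getVert k ∧ r.getVert k ≠ q.getVert k := by
      intro k hlk hki
      rcases Nat.lt_or_eq_of_le hki with hki | rfl
      · have := not_or.mp (hlast k hlk (by omega))
        exact ⟨Ne.symm this.1, Ne.symm this.2⟩
      · have hrc : r.getVert (i + 1) ≠ p.getVert (i + 1) :=
          fun h => hcr (h ▸ r.getVert_mem_support (i + 1))
        exact ⟨hrc, hc ▸ hrc⟩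
    rcases hl with hl | hl
    · obtain ⟨p', hp', hp'q⟩ := exists_getVert_ne_of_reroute hp hrd hli (by omega) hpq hl
        fun k hlk hki => (hmiss k hlk hki).2
      exact ⟨p', q, hp', hq, hp'q⟩
    · obtain ⟨q', hq', hq'p⟩ := exists_getVert_ne_of_reroute hq hrd hli (by omega)
        (fun k hk hki => (hpq k hk hki).symm) hl fun k hlk hki => (hmiss k hlk hki).1
      exact ⟨p, q', hp, hq', fun k hk hki => (hq'p k hk hki).symm⟩

lemma Walk.mem_support_and_mem_support_iff {p q : G.Walk u v} (hp : p.length = G.dist u v)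
    (hq : q.length = G.dist u v)
    (hpq : ∀ k, 0 < k → k < G.dist u v → p.getVert k ≠ q.getVert k) (x : V) :
    x ∈ p.support ∧ x ∈ q.support ↔ x = u ∨ x = v := by
  refine ⟨fun ⟨hxp, hxq⟩ => ?_, by rintro (rfl | rfl) <;> simp⟩
  obtain ⟨k, rfl, hk⟩ := Walk.mem_support_iff_exists_getVert.mp hxp
  obtain ⟨m, hm, hm'⟩ := Walk.mem_support_iff_exists_getVert.mp hxq
  have hkm : m = k := by
    rw [← dist_getVert_of_length_eq_dist hp hk, ← hm, dist_getVert_of_length_eq_dist hq hm']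
  subst hkm
  rcases Nat.eq_zero_or_pos m with rfl | hm0
  · simp
  rcases Nat.lt_or_eq_of_le hk with hk | rfl
  · exact absurd hm.symm (hpq m hm0 (by omega))
  · simp

end SimpleGraph

theorem stressInterval_eq_pair_iff_general {V : Type*}
    (G : SimpleGraph V) (hG : G.Connected) (u v : V) (huv : u ≠ v) :
    G.stressInterval u v = {u, v} ↔
      (G.Adj u v ∨
        ∃ p q : G.Walk u v, p.IsPath ∧ q.IsPath ∧
          p.length = G.dist u v ∧ q.length = G.dist u v ∧ p ≠ q ∧
          (∀ x : V, (x ∈ p.support ∧ x ∈ q.support) ↔ (x = u ∨ x = v))) := by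
  have hpair := SimpleGraph.pair_subset_stressInterval (hG.preconnected u v)
  refine ⟨fun hS => ?_, fun h => (Set.Subset.antisymm · hpair) ?_⟩
  · by_cases hadj : G.Adj u v
    · exact .inl hadj
    have hd := hG.one_lt_dist_of_ne_of_not_adj huv hadj
    obtain ⟨p, q, hp, hq, hpq⟩ := SimpleGraph.exists_geodesics_getVert_ne (hG.preconnected u v)
      hS.subset (G.dist u v - 1) (by omega)
    have hpq' : ∀ k, 0 < k → k < G.dist u v → p.getVert k ≠ q.getVert k :=
      fun k hk hkd => hpq k hk (by omega)
    refine .inr ⟨p, q, p.isPath_of_length_eq_dist hp, q.isPath_of_length_eq_dist hq, hp, hq,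
      fun h => hpq' 1 one_pos hd (h ▸ rfl), p.mem_support_and_mem_support_iff hp hq hpq'⟩
  · rcases h with hadj | ⟨p, q, hp, hq, hpl, hql, -, hpq⟩
    · exact SimpleGraph.stressInterval_subset_of_adj hadj
    · exact fun x hx => (hpq x).1 ⟨hx.2 p hp hpl, hx.2 q hq hql⟩

/-- In a connected finite graph, `S(u,v) = {u,v}` iff `uv` is an edge
or there are two internally disjoint shortest `u,v`-paths. -/
theorem stressInterval_eq_pair_iff {V : Type*} [Fintype V]
    (G : SimpleGraph V) (hG : G.Connected) (u v : V) (huv : u ≠ v) :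
    G.stressInterval u v = {u, v} ↔
      (G.Adj u v ∨
        ∃ p q : G.Walk u v, p.IsPath ∧ q.IsPath ∧
          p.length = G.dist u v ∧ q.length = G.dist u v ∧ p ≠ q ∧
          (∀ x : V, (x ∈ p.support ∧ x ∈ q.support) ↔ (x = u ∨ x = v))) :=
  stressInterval_eq_pair_iff_general G hG u v huv
end

section
/- Let G be a finite simple graph, let u, v be vertices of G, and let H be the subgraph of G induced by the interval I(u,v). Then for every vertex x ∈ S(u,v) \ {u,v}, the graph obtained from H by deleting x is not connected. -/
private lemma reach_dist_triangle {V : Type*} (G : SimpleGraph V) {u v w : V}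
    (h1 : G.Reachable u v) (h2 : G.Reachable v w) :
    G.dist u w ≤ G.dist u v + G.dist v w := by
  obtain ⟨p, hp⟩ := h1.exists_walk_length_eq_dist
  obtain ⟨q, hq⟩ := h2.exists_walk_length_eq_dist
  calc G.dist u w ≤ (p.append q).length := SimpleGraph.dist_le _
  _ = _ := by rw [SimpleGraph.Walk.length_append, hp, hq]

/-- Splitting a geodesic at an interior vertex. -/
private lemma geo_split {V : Type*} [DecidableEq V] {G : SimpleGraph V} {u v w : V} (p : G.Walk u v)
    (hl : p.length = G.dist u v) (hw : w ∈ p.support) :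
    G.dist u w = (p.takeUntil w hw).length ∧ G.dist w v = (p.dropUntil w hw).length ∧
    G.dist u w + G.dist w v = G.dist u v := by
  have hsum : (p.takeUntil w hw).length + (p.dropUntil w hw).length = p.length := by
    conv_rhs => rw [← p.take_spec hw]
    rw [SimpleGraph.Walk.length_append]
  have h1 : G.dist u w ≤ (p.takeUntil w hw).length := SimpleGraph.dist_le _
  have h2 : G.dist w v ≤ (p.dropUntil w hw).length := SimpleGraph.dist_le _
  have h3 : G.dist u v ≤ G.dist u w + G.dist w v :=
    reach_dist_triangle G ⟨p.takeUntil w hw⟩ ⟨p.dropUntil w hw⟩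
  refine ⟨by omega, by omega, by omega⟩

/-- Any vertex of the interval at the same distance from `u` as a stress vertex
equals that stress vertex. -/
private lemma eq_of_dist_eq {V : Type*} [DecidableEq V] {G : SimpleGraph V} {u v x w : V}
    (hx : x ∈ G.stressInterval u v) (hw : w ∈ G.interval u v)
    (hd : G.dist u w = G.dist u x) : w = x := by
  obtain ⟨p, hp, hl, hwp⟩ := hw
  have hxp : x ∈ p.support := hx.2 p hp hl
  obtain ⟨hq1, hq2, hq3⟩ := geo_split p hl hxp
  -- w is in the first or second part of p split at x
  have := p.take_spec hxp
  have hmem : w ∈ (p.takeUntil x hxp).support ∨ w ∈ (p.dropUntil x hxp).support := by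
    rw [← SimpleGraph.Walk.mem_support_append_iff, this]; exact hwp
  rcases hmem with h | h
  · obtain ⟨_, _, h3⟩ := geo_split (p.takeUntil x hxp) hq1.symm h
    have : G.dist w x = 0 := by omega
    have hr : G.Reachable w x := ⟨(p.takeUntil x hxp).dropUntil w h⟩
    exact (hr.dist_eq_zero_iff).mp this
  · obtain ⟨h1', _, h3⟩ := geo_split (p.dropUntil x hxp) hq2.symm h
    obtain ⟨_, _, hw3⟩ := geo_split p hl hwp
    have : G.dist x w = 0 := by omega
    have hr : G.Reachable x w := ⟨(p.dropUntil x hxp).takeUntil w h⟩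
    exact ((hr.dist_eq_zero_iff).mp this).symm

private lemma walk_preserve {V' : Type*} {G' : SimpleGraph V'} (P : V' → Prop)
    (h : ∀ a b, G'.Adj a b → P a → P b) {a b : V'} (W : G'.Walk a b) : P a → P b := by
  induction W with
  | nil => exact id
  | cons hadj _ ih => exact fun ha => ih (h _ _ hadj ha)

/-- Deleting a vertex of `S(u,v) \ {u,v}` from the subgraph of `G`
induced by `I(u,v)` disconnects it. -/
theorem induce_interval_delete_not_connected {V : Type*} [Fintype V]
    (G : SimpleGraph V) (u v x : V)
    (hx : x ∈ G.stressInterval u v) (hxu : x ≠ u) (hxv : x ≠ v) :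
    ¬ (G.induce (G.interval u v \ {x})).Connected := by
  classical
  intro hconn
  obtain ⟨hr, hall⟩ := hx
  obtain ⟨p, hp, hl⟩ := hr.exists_path_of_dist
  have hxp : x ∈ p.support := hall p hp hl
  have hu : u ∈ G.interval u v := ⟨p, hp, hl, p.start_mem_support⟩
  have hv : v ∈ G.interval u v := ⟨p, hp, hl, p.end_mem_support⟩
  -- reachability from u to any interval vertex
  have hreach : ∀ w ∈ G.interval u v, G.Reachable u w := by
    rintro w ⟨q, _, _, hwq⟩
    exact ⟨q.takeUntil w hwq⟩
  set k := G.dist u x with hk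
  have hsplit := geo_split p hl hxp
  have hk_pos : 0 < k := by
    have : G.dist u x ≠ 0 := fun h0 =>
      hxu ((hreach x ⟨p, hp, hl, hxp⟩).dist_eq_zero_iff.mp h0).symm
    omega
  have hxv_pos : 0 < G.dist x v := by
    have : G.dist x v ≠ 0 := fun h0 =>
      hxv (SimpleGraph.Reachable.dist_eq_zero_iff (⟨p.dropUntil x hxp⟩ : G.Reachable x v) |>.mp h0)
    omega
  have hv_gt : k < G.dist u v := by omega
  -- no vertex of the deleted set is at distance k
  have hne : ∀ w ∈ G.interval u v \ ({x} : Set V), G.dist u w ≠ k := by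
    rintro w ⟨hw1, hw2⟩ habs
    exact hw2 (eq_of_dist_eq ⟨hr, hall⟩ hw1 habs)
  -- the invariant
  set S := G.interval u v \ ({x} : Set V)
  have key : ∀ a b : S, (G.induce S).Adj a b → G.dist u a.1 < k → G.dist u b.1 < k := by
    rintro ⟨a, ha⟩ ⟨b, hb⟩ hadj hlt
    have hGadj : G.Adj a b := hadj
    have hab : G.dist a b ≤ 1 := by
      have := SimpleGraph.dist_le (hGadj.toWalk)
      simpa using this
    have htri : G.dist u b ≤ G.dist u a + G.dist a b :=
      reach_dist_triangle G (hreach a ha.1) hGadj.reachable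
    have hneb := hne b hb
    simp only at hlt ⊢
    omega
  have hrS : (G.induce S).Reachable ⟨u, hu, fun h => hxu (by simpa using h.symm)⟩
      ⟨v, hv, fun h => hxv (by simpa using h.symm)⟩ := hconn _ _
  obtain ⟨W⟩ := hrS
  have h0 : G.dist u u < k := by rw [SimpleGraph.dist_self]; exact hk_pos
  have hvlt : G.dist u v < k :=
    walk_preserve (fun a : S => G.dist u a.1 < k) key W h0
  omega
end

section
/- Let G be a connected finite simple graph and let u, v be vertices of G. Then S(u,v) = {x ∈ I(u,v) : x is a cut vertex of the induced subgraph G[I(u,v)]} ∪ {u,v}. -/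
/-- `x` is a cut vertex of the subgraph of `G` induced by `X`: it belongs to `X` and
deleting it increases the number of connected components. -/
def SimpleGraph.IsCutVertexOfInduced {V : Type*} (G : SimpleGraph V)
    (X : Set V) (x : V) : Prop :=
  x ∈ X ∧ Nat.card ((G.induce (X \ {x})).ConnectedComponent) >
    Nat.card ((G.induce X).ConnectedComponent)

/-!
A vertex `x ∉ {u, v}` lies on every shortest `u,v`-path iff it separates `u` from `v` in
`G[I(u,v)] - x`. If some shortest path avoids `x`, it joins `u` to `v` there. Conversely, along a
`u,v`-walk inside `I(u,v)` the distance from `u` changes by at most one per step, so the walk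
meets the level `d(u,x)`; every vertex of `I(u,v)` on that level lies on a shortest path together
with `x`, hence equals `x`. Finally `G[I(u,v)]` is connected and every vertex of `G[I(u,v)] - x` is
joined to `u` or to `v` by one half of a shortest path through it, so `x` is a cut vertex exactly
when it separates `u` from `v`.
-/

namespace SimpleGraph

variable {V : Type*} {G : SimpleGraph V}

lemma Connected.nat_card_connectedComponent {W : Type*} {H : SimpleGraph W} (h : H.Connected) :
    Nat.card H.ConnectedComponent = 1 :=
  Nat.card_eq_one_iff_unique.mpr
    ⟨h.preconnected.subsingleton_connectedComponent, h.nonempty.map H.connectedComponentMk⟩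

lemma one_lt_nat_card_connectedComponent_iff {W : Type*} {H : SimpleGraph W} {a b : W}
    (h : ∀ w, H.Reachable w a ∨ H.Reachable w b) :
    1 < Nat.card H.ConnectedComponent ↔ ¬ H.Reachable a b := by
  have hsurj : Function.Surjective fun t : Bool ↦
      cond t (H.connectedComponentMk a) (H.connectedComponentMk b) := by
    refine ConnectedComponent.ind fun w ↦ ?_
    rcases h w with hw | hw
    exacts [⟨true, ConnectedComponent.sound hw.symm⟩, ⟨false, ConnectedComponent.sound hw.symm⟩]
  have := Finite.of_surjective _ hsurj
  rw [Finite.one_lt_card_iff_nontrivial]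
  refine ⟨fun ⟨c, d, hcd⟩ hab ↦ ?_, fun hab ↦ ⟨_, _, fun e ↦ hab (ConnectedComponent.exact e)⟩⟩
  have hreach : ∀ w, H.Reachable w a := fun w ↦ (h w).elim id (·.trans hab.symm)
  have : H.Preconnected := fun w w' ↦ (hreach w).trans (hreach w').symm
  exact hcd (this.subsingleton_connectedComponent.elim c d)

namespace Walk

variable {u v x y : V}

lemma IsPath.eq_of_mem_support_takeUntil_of_mem_support_dropUntil [DecidableEq V]
    {p : G.Walk u v} (hp : p.IsPath) (hy : y ∈ p.support)
    (hx₁ : x ∈ (p.takeUntil y hy).support) (hx₂ : x ∈ (p.dropUntil y hy).support) : x = y := by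
  have hnodup := hp.support_nodup
  rw [← p.take_spec hy, support_append] at hnodup
  rw [← cons_tail_support] at hx₂
  exact (List.mem_cons.mp hx₂).resolve_right (List.disjoint_of_nodup_append hnodup hx₁)

lemma length_takeUntil_eq_dist [DecidableEq V] {p : G.Walk u v} (hp : p.length = G.dist u v)
    (hx : x ∈ p.support) : (p.takeUntil x hx).length = G.dist u x :=
  length_eq_dist_of_subwalk hp (p.isSubwalk_takeUntil hx)

lemma length_dropUntil_eq_dist [DecidableEq V] {p : G.Walk u v} (hp : p.length = G.dist u v)
    (hx : x ∈ p.support) : (p.dropUntil x hx).length = G.dist x v :=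
  length_eq_dist_of_subwalk hp (p.isSubwalk_dropUntil hx)

lemma dist_add_dist_of_mem_support {p : G.Walk u v} (hp : p.length = G.dist u v)
    (hx : x ∈ p.support) : G.dist u x + G.dist x v = G.dist u v := by
  classical
  rw [← length_takeUntil_eq_dist hp hx, ← length_dropUntil_eq_dist hp hx, ← length_append,
    take_spec, hp]

lemma eq_of_dist_eq_of_mem_support {p : G.Walk u v} (hp : p.length = G.dist u v)
    (hx : x ∈ p.support) (hy : y ∈ p.support) (h : G.dist u x = G.dist u y) : x = y := by
  classical
  rw [← length_takeUntil_eq_dist hp hx, ← length_takeUntil_eq_dist hp hy,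
    length_takeUntil, length_takeUntil] at h
  exact (List.idxOf_inj hx).mp h

lemma exists_mem_support_dist_eq (u : V) {a b : V} (w : G.Walk a b) {k : ℕ}
    (ha : G.dist u a ≤ k) (hb : k ≤ G.dist u b) : ∃ z ∈ w.support, G.dist u z = k := by
  induction w with
  | nil => exact ⟨_, start_mem_support _, ha.antisymm hb⟩
  | @cons a c b hac w ih =>
    obtain rfl | hlt := ha.eq_or_lt
    · exact ⟨a, start_mem_support _, rfl⟩
    · have hc : G.dist u c ≤ k := by have := hac.diff_dist_adj (u := u); omega
      obtain ⟨z, hz, hzk⟩ := ih hc hb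
      exact ⟨z, by simp [hz], hzk⟩

lemma mem_interval_of_mem_support {p : G.Walk u v} (hp : p.length = G.dist u v)
    (hx : x ∈ p.support) : x ∈ G.interval u v :=
  ⟨p, p.isPath_of_length_eq_dist hp, hp, hx⟩

end Walk

variable {u v x : V}

lemma reachable_of_mem_interval (hx : x ∈ G.interval u v) : G.Reachable u v :=
  hx.elim fun p _ ↦ p.reachable

lemma left_mem_interval (h : G.Reachable u v) : u ∈ G.interval u v := by
  obtain ⟨p, -, hp⟩ := h.exists_path_of_dist
  exact p.mem_interval_of_mem_support hp p.start_mem_support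

lemma right_mem_interval (h : G.Reachable u v) : v ∈ G.interval u v := by
  obtain ⟨p, -, hp⟩ := h.exists_path_of_dist
  exact p.mem_interval_of_mem_support hp p.end_mem_support

lemma left_mem_stressInterval (h : G.Reachable u v) : u ∈ G.stressInterval u v :=
  ⟨h, fun p _ _ ↦ p.start_mem_support⟩

lemma right_mem_stressInterval (h : G.Reachable u v) : v ∈ G.stressInterval u v :=
  ⟨h, fun p _ _ ↦ p.end_mem_support⟩

lemma stressInterval_subset_interval : G.stressInterval u v ⊆ G.interval u v := by
  rintro x ⟨h, hx⟩
  obtain ⟨p, hpath, hp⟩ := h.exists_path_of_dist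
  exact p.mem_interval_of_mem_support hp (hx p hpath hp)

lemma Walk.mem_support_of_mem_stressInterval (hx : x ∈ G.stressInterval u v) (w : G.Walk u v)
    (hw : ∀ z ∈ w.support, z ∈ G.interval u v) : x ∈ w.support := by
  obtain ⟨p, hpath, hp⟩ := hx.1.exists_path_of_dist
  have hxv : G.dist u x ≤ G.dist u v := by
    have := p.dist_add_dist_of_mem_support hp (hx.2 p hpath hp)
    omega
  obtain ⟨z, hzw, hzx⟩ := w.exists_mem_support_dist_eq u (by simp) hxv
  obtain ⟨q, hqpath, hq, hzq⟩ := hw z hzw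
  rwa [q.eq_of_dist_eq_of_mem_support hq hzq (hx.2 q hqpath hq) hzx] at hzw

lemma connected_induce_interval (h : G.Reachable u v) : (G.induce (G.interval u v)).Connected := by
  classical
  refine (connected_iff_exists_forall_reachable _).mpr ⟨⟨u, left_mem_interval h⟩, ?_⟩
  rintro ⟨y, q, -, hq, hy⟩
  exact ((q.takeUntil y hy).induce _ fun z hz ↦
    q.mem_interval_of_mem_support hq (q.support_takeUntil_subset_support hy hz)).reachable

lemma reachable_or_reachable_induce_interval_diff (hu : u ∈ G.interval u v \ {x})
    (hv : v ∈ G.interval u v \ {x}) (y : ↥(G.interval u v \ {x})) :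
    (G.induce (G.interval u v \ {x})).Reachable y ⟨u, hu⟩ ∨
      (G.induce (G.interval u v \ {x})).Reachable y ⟨v, hv⟩ := by
  classical
  obtain ⟨y, ⟨q, hqpath, hq, hy⟩, hyx⟩ := y
  by_cases hxq : x ∈ (q.takeUntil y hy).support
  · have hxq' : x ∉ (q.dropUntil y hy).support := fun h ↦
      hyx (hqpath.eq_of_mem_support_takeUntil_of_mem_support_dropUntil hy hxq h).symm
    right
    refine ((q.dropUntil y hy).induce _ fun z hz ↦ Set.mem_sdiff_singleton.mpr ⟨?_, ?_⟩).reachable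
    · exact q.mem_interval_of_mem_support hq (q.support_dropUntil_subset_support hy hz)
    · rintro rfl; exact hxq' hz
  · left
    refine ((q.takeUntil y hy).reverse.induce _ fun z hz ↦
      Set.mem_sdiff_singleton.mpr ⟨?_, ?_⟩).reachable
    · rw [Walk.support_reverse, List.mem_reverse] at hz
      exact q.mem_interval_of_mem_support hq (q.support_takeUntil_subset_support hy hz)
    · rintro rfl; exact hxq (by simpa using hz)

lemma mem_stressInterval_iff_not_reachable_induce (hu : u ∈ G.interval u v \ {x})
    (hv : v ∈ G.interval u v \ {x}) :
    x ∈ G.stressInterval u v ↔ ¬ (G.induce (G.interval u v \ {x})).Reachable ⟨u, hu⟩ ⟨v, hv⟩ := by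
  constructor
  · rintro hx ⟨w⟩
    set w' := w.map (Embedding.induce _).toHom
    have hw' : ∀ z ∈ w'.support, z ∈ G.interval u v \ {x} := by
      simp only [w', Walk.support_map, List.mem_map]
      rintro _ ⟨z, -, rfl⟩
      exact z.2
    exact (hw' x (w'.mem_support_of_mem_stressInterval hx fun z hz ↦ (hw' z hz).1)).2 rfl
  · refine fun hnr ↦ ⟨reachable_of_mem_interval hu.1, fun p _ hp ↦ ?_⟩
    by_contra hxp
    refine hnr (p.induce _ fun z hz ↦ Set.mem_sdiff_singleton.mpr ⟨?_, ?_⟩).reachable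
    · exact p.mem_interval_of_mem_support hp hz
    · rintro rfl; exact hxp hz

lemma isCutVertexOfInduced_interval_iff (hu : u ∈ G.interval u v \ {x})
    (hv : v ∈ G.interval u v \ {x}) :
    G.IsCutVertexOfInduced (G.interval u v) x ↔
      x ∈ G.interval u v ∧ ¬ (G.induce (G.interval u v \ {x})).Reachable ⟨u, hu⟩ ⟨v, hv⟩ := by
  rw [IsCutVertexOfInduced, gt_iff_lt,
    (connected_induce_interval (reachable_of_mem_interval hu.1)).nat_card_connectedComponent,
    one_lt_nat_card_connectedComponent_iff (reachable_or_reachable_induce_interval_diff hu hv)]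

end SimpleGraph

theorem stressInterval_eq_cutVertices_union_general {V : Type*}
    (G : SimpleGraph V) (hG : G.Connected) (u v : V) :
    G.stressInterval u v =
      {x | x ∈ G.interval u v ∧ G.IsCutVertexOfInduced (G.interval u v) x}
        ∪ {u, v} := by
  have huv := hG.preconnected u v
  ext x
  by_cases hx : x = u ∨ x = v
  · have hxS : x ∈ G.stressInterval u v := by
      rcases hx with rfl | rfl
      exacts [G.left_mem_stressInterval huv, G.right_mem_stressInterval huv]
    exact iff_of_true hxS (Or.inr hx)
  push Not at hx
  have hu : u ∈ G.interval u v \ {x} := ⟨G.left_mem_interval huv, hx.1.symm⟩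
  have hv : v ∈ G.interval u v \ {x} := ⟨G.right_mem_interval huv, hx.2.symm⟩
  simp only [Set.mem_union, Set.mem_ofPred_eq, Set.mem_insert_iff, Set.mem_singleton_iff, hx.1,
    hx.2, or_false, G.isCutVertexOfInduced_interval_iff hu hv,
    ← G.mem_stressInterval_iff_not_reachable_induce hu hv]
  rw [and_self_left]
  exact iff_and_self.mpr (G.stressInterval_subset_interval ·)

/-- In a connected finite graph,
`S(u,v) = {x ∈ I(u,v) : x is a cut vertex of G[I(u,v)]} ∪ {u,v}`. -/
theorem stressInterval_eq_cutVertices_union {V : Type*} [Fintype V]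
    (G : SimpleGraph V) (hG : G.Connected) (u v : V) :
    G.stressInterval u v =
      {x | x ∈ G.interval u v ∧ G.IsCutVertexOfInduced (G.interval u v) x}
        ∪ {u, v} :=
  stressInterval_eq_cutVertices_union_general G hG u v
end

section
/- Let G be a connected finite simple graph and let u, v, x be vertices of G. Then x ∈ S(u,v) if and only if I(u,x) ∪ I(x,v) = I(u,v). -/
namespace MyAux

open SimpleGraph

variable {V : Type*} {G : SimpleGraph V} [DecidableEq V]

/-- splitting a shortest walk at a support vertex gives shortest pieces. -/
lemma split_lengths {u v y : V} (p : G.Walk u v) (hp : p.length = G.dist u v)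
    (hy : y ∈ p.support) :
    (p.takeUntil y hy).length = G.dist u y ∧ (p.dropUntil y hy).length = G.dist y v := by
  have hsum : (p.takeUntil y hy).length + (p.dropUntil y hy).length = p.length := by
    rw [← SimpleGraph.Walk.length_append, p.take_spec hy]
  have h1 : G.dist u y ≤ (p.takeUntil y hy).length := SimpleGraph.dist_le _
  have h2 : G.dist y v ≤ (p.dropUntil y hy).length := SimpleGraph.dist_le _
  have htri : G.dist u v ≤ G.dist u y + G.dist y v := by
    obtain ⟨q, hq⟩ := ((p.takeUntil y hy).reachable).exists_walk_length_eq_dist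
    obtain ⟨r, hr⟩ := ((p.dropUntil y hy).reachable).exists_walk_length_eq_dist
    calc G.dist u v ≤ (q.append r).length := SimpleGraph.dist_le _
      _ = G.dist u y + G.dist y v := by rw [SimpleGraph.Walk.length_append, hq, hr]
  omega

lemma dist_add_eq {u v y : V} (p : G.Walk u v) (hp : p.length = G.dist u v)
    (hy : y ∈ p.support) : G.dist u y + G.dist y v = G.dist u v := by
  obtain ⟨h1, h2⟩ := split_lengths p hp hy
  have hsum : (p.takeUntil y hy).length + (p.dropUntil y hy).length = p.length := by
    rw [← SimpleGraph.Walk.length_append, p.take_spec hy]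
  omega

lemma getVert_mem_support {u v : V} (p : G.Walk u v) (n : ℕ) :
    p.getVert n ∈ p.support := by
  induction p generalizing n with
  | nil => simp [SimpleGraph.Walk.getVert]
  | cons h q ih =>
    cases n with
    | zero => simp [SimpleGraph.Walk.getVert]
    | succ n =>
      rw [SimpleGraph.Walk.getVert_cons_succ]
      simp [ih n]

lemma exists_walk_getVert {u v : V} (p : G.Walk u v) (n : ℕ) :
    ∃ q : G.Walk u (p.getVert n), q.length ≤ n := by
  induction p generalizing n with
  | nil => exact ⟨(SimpleGraph.Walk.nil).copy rfl (by simp [SimpleGraph.Walk.getVert]), by simp⟩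
  | cons h q ih =>
    cases n with
    | zero =>
      exact ⟨(SimpleGraph.Walk.nil).copy rfl (by simp), by simp⟩
    | succ n =>
      obtain ⟨w, hw⟩ := ih n
      exact ⟨(w.cons h).copy rfl (SimpleGraph.Walk.getVert_cons_succ q h).symm,
        by simpa using Nat.succ_le_succ hw⟩

lemma dist_getVert_le {u v : V} (p : G.Walk u v) (n : ℕ) :
    G.dist u (p.getVert n) ≤ n := by
  obtain ⟨q, hq⟩ := exists_walk_getVert p n
  exact le_trans (SimpleGraph.dist_le q) hq

lemma getVert_dist_le {u v : V} (p : G.Walk u v) (n : ℕ) :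
    G.dist (p.getVert n) v ≤ p.length - n := by
  induction p generalizing n with
  | nil => simp [SimpleGraph.Walk.getVert]
  | cons h q ih =>
    cases n with
    | zero =>
      simpa using SimpleGraph.dist_le (SimpleGraph.Walk.cons h q)
    | succ n =>
      rw [SimpleGraph.Walk.getVert_cons_succ]
      simpa using ih n

end MyAux

/-- In a connected finite graph,
`x ∈ S(u,v)` iff `I(u,x) ∪ I(x,v) = I(u,v)`. -/
theorem mem_stressInterval_iff_interval_union {V : Type*} [Fintype V]
    (G : SimpleGraph V) (hG : G.Connected) (u v x : V) :
    x ∈ G.stressInterval u v ↔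
      G.interval u x ∪ G.interval x v = G.interval u v := by
  classical
  constructor
  · rintro ⟨hr, hall⟩
    obtain ⟨p₀, hp₀path, hp₀len⟩ := hG.exists_path_of_dist u v
    have hx₀ : x ∈ p₀.support := hall p₀ hp₀path hp₀len
    have hkey : G.dist u x + G.dist x v = G.dist u v :=
      MyAux.dist_add_eq p₀ hp₀len hx₀
    apply Set.eq_of_subset_of_subset
    · rintro y (⟨q, hqpath, hqlen, hyq⟩ | ⟨r, hrpath, hrlen, hyr⟩)
      · obtain ⟨r, hrlen⟩ := (hG x v).exists_walk_length_eq_dist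
        refine ⟨q.append r, ?_, ?_, ?_⟩
        · apply SimpleGraph.Walk.isPath_of_length_eq_dist
          rw [SimpleGraph.Walk.length_append, hqlen, hrlen, hkey]
        · rw [SimpleGraph.Walk.length_append, hqlen, hrlen, hkey]
        · rw [SimpleGraph.Walk.mem_support_append_iff]; exact Or.inl hyq
      · obtain ⟨q, hqlen⟩ := (hG u x).exists_walk_length_eq_dist
        refine ⟨q.append r, ?_, ?_, ?_⟩
        · apply SimpleGraph.Walk.isPath_of_length_eq_dist
          rw [SimpleGraph.Walk.length_append, hqlen, hrlen, hkey]
        · rw [SimpleGraph.Walk.length_append, hqlen, hrlen, hkey]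
        · rw [SimpleGraph.Walk.mem_support_append_iff]; exact Or.inr hyr
    · rintro y ⟨p, hppath, hplen, hyp⟩
      have hxp : x ∈ p.support := hall p hppath hplen
      obtain ⟨ht, hd⟩ := MyAux.split_lengths p hplen hxp
      have : y ∈ (p.takeUntil x hxp).support ∨ y ∈ (p.dropUntil x hxp).support := by
        rw [← SimpleGraph.Walk.mem_support_append_iff, p.take_spec hxp]; exact hyp
      rcases this with h | h
      · exact Or.inl ⟨p.takeUntil x hxp, hppath.takeUntil hxp, ht, h⟩
      · exact Or.inr ⟨p.dropUntil x hxp, hppath.dropUntil hxp, hd, h⟩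
  · intro heq
    refine ⟨hG u v, fun p hppath hplen => ?_⟩
    -- x ∈ I(u,v):
    have hxI : x ∈ G.interval u v := by
      rw [← heq]
      obtain ⟨q, hqpath, hqlen⟩ := hG.exists_path_of_dist u x
      exact Or.inl ⟨q, hqpath, hqlen, q.end_mem_support⟩
    obtain ⟨q₀, hq₀path, hq₀len, hxq₀⟩ := hxI
    have hkey : G.dist u x + G.dist x v = G.dist u v :=
      MyAux.dist_add_eq q₀ hq₀len hxq₀
    set k := G.dist u x with hk
    set y := p.getVert k with hy
    have hyp : y ∈ p.support := MyAux.getVert_mem_support p k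
    have h1 : G.dist u y ≤ k := MyAux.dist_getVert_le p k
    have h2 : G.dist y v ≤ G.dist u v - k := by
      have := MyAux.getVert_dist_le p k
      rwa [hplen] at this
    have htri : G.dist u v ≤ G.dist u y + G.dist y v := hG.dist_triangle
    have hkd : k ≤ G.dist u v := by omega
    have h1' : G.dist u y = k := by omega
    have h2' : G.dist y v = G.dist u v - k := by omega
    have hyI : y ∈ G.interval u v := ⟨p, hppath, hplen, hyp⟩
    rw [← heq] at hyI
    have hxy : x = y := by
      rcases hyI with ⟨q, hqpath, hqlen, hyq⟩ | ⟨r, hrpath, hrlen, hyr⟩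
      · have := MyAux.dist_add_eq q hqlen hyq
        have hz : G.dist y x = 0 := by omega
        exact (hG.dist_eq_zero_iff.mp hz).symm
      · have := MyAux.dist_add_eq r hrlen hyr
        have hz : G.dist x y = 0 := by omega
        exact hG.dist_eq_zero_iff.mp hz
    rw [hxy]; exact hyp
end

section
/- For a finite simple graph G the following statements are equivalent: (a) G is s-trivial, i.e., S(u,v) ⊆ {u,v} for all vertices u, v; (b) for any two non-adjacent vertices u and v lying in the same connected component of G there exist at least two internally disjoint shortest u,v-paths; (c) for any two vertices u, v of G at distance 2 there exist at least two distinct shortest u,v-paths (equivalently, u and v have at least two common neighbors). -/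
namespace STrivialAux

open SimpleGraph Walk

variable {V : Type*} {G : SimpleGraph V}

lemma length_two_decomp {a b : V} (p : G.Walk a b) (h : p.length = 2) :
    ∃ (m : V) (h1 : G.Adj a m) (h2 : G.Adj m b),
      p = Walk.cons h1 (Walk.cons h2 Walk.nil) := by
  cases p with
  | nil => simp at h
  | cons h1 q =>
    cases q with
    | nil => simp at h
    | cons h2 r =>
      cases r with
      | nil => exact ⟨_, h1, h2, rfl⟩
      | cons h3 s => simp [Walk.length_cons] at h

lemma notNil_decomp {u v : V} (p : G.Walk u v) (h : u ≠ v) :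
    ∃ (b : V) (hadj : G.Adj u b) (q : G.Walk b v), p = Walk.cons hadj q := by
  cases p with
  | nil => exact absurd rfl h
  | cons hadj q => exact ⟨_, hadj, q, rfl⟩

lemma dist_add_dist_le_of_mem_support {u v z : V} (p : G.Walk u v) (hz : z ∈ p.support) :
    G.dist u z + G.dist z v ≤ p.length := by
  classical
  calc G.dist u z + G.dist z v
      ≤ (p.takeUntil z hz).length + (p.dropUntil z hz).length :=
        Nat.add_le_add (SimpleGraph.dist_le _) (SimpleGraph.dist_le _)
    _ = p.length := by rw [← Walk.length_append, p.take_spec hz]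


lemma dist_triangle' {u v w : V} (h1 : G.Reachable u v) (h2 : G.Reachable v w) :
    G.dist u w ≤ G.dist u v + G.dist v w := by
  obtain ⟨p, _, hp⟩ := h1.exists_path_of_dist
  obtain ⟨q, _, hq⟩ := h2.exists_path_of_dist
  have := SimpleGraph.dist_le (p.append q)
  rwa [Walk.length_append, hp, hq] at this

/-- From hypothesis (c), get two distinct shortest length-2 paths with distinct
midpoints. -/
lemma two_midpoints
    (hC : ∀ u v : V, G.dist u v = 2 →
      ∃ p q : G.Walk u v, p.IsPath ∧ q.IsPath ∧ p.length = 2 ∧ q.length = 2 ∧ p ≠ q)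
    {a b : V} (hd : G.dist a b = 2) :
    ∃ m₁ m₂ : V, m₁ ≠ m₂ ∧ G.Adj a m₁ ∧ G.Adj m₁ b ∧ G.Adj a m₂ ∧ G.Adj m₂ b := by
  obtain ⟨p, q, hp, hq, hpl, hql, hpq⟩ := hC a b hd
  obtain ⟨m₁, h1, h1', hp'⟩ := length_two_decomp p hpl
  obtain ⟨m₂, h2, h2', hq'⟩ := length_two_decomp q hql
  refine ⟨m₁, m₂, ?_, h1, h1', h2, h2'⟩
  rintro rfl
  exact hpq (hp'.trans hq'.symm)

/-- Main induction for (c) → (b). -/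
lemma key
    (hC : ∀ u v : V, G.dist u v = 2 →
      ∃ p q : G.Walk u v, p.IsPath ∧ q.IsPath ∧ p.length = 2 ∧ q.length = 2 ∧ p ≠ q) :
    ∀ (d : ℕ) (u v : V), G.dist u v = d → u ≠ v → ¬ G.Adj u v → G.Reachable u v →
      ∃ p q : G.Walk u v, p.IsPath ∧ q.IsPath ∧
        p.length = G.dist u v ∧ q.length = G.dist u v ∧ p ≠ q ∧
        (∀ x : V, (x ∈ p.support ∧ x ∈ q.support) ↔ (x = u ∨ x = v)) := by
  classical
  intro d
  induction d using Nat.strong_induction_on with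
  | _ d ih =>
  intro u v hd hne hadj hr
  have hd0 : d ≠ 0 := by
    rintro rfl
    rcases SimpleGraph.dist_eq_zero_iff_eq_or_not_reachable.mp hd with h | h
    · exact hne h
    · exact h hr
  have hd1 : d ≠ 1 := by
    rintro rfl
    exact hadj (SimpleGraph.dist_eq_one_iff_adj.mp hd)
  rcases eq_or_lt_of_le (show 2 ≤ d by omega) with hd2 | hd3
  · -- base case: d = 2
    obtain ⟨p, q, hp, hq, hpl, hql, hpq⟩ := hC u v (hd.trans hd2.symm)
    obtain ⟨m₁, h1, h1', hp'⟩ := length_two_decomp p hpl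
    obtain ⟨m₂, h2, h2', hq'⟩ := length_two_decomp q hql
    have hm : m₁ ≠ m₂ := by rintro rfl; exact hpq (hp'.trans hq'.symm)
    have hps : p.support = [u, m₁, v] := by rw [hp']; simp
    have hqs : q.support = [u, m₂, v] := by rw [hq']; simp
    have hpnd := hp.support_nodup
    have hqnd := hq.support_nodup
    rw [hps] at hpnd; rw [hqs] at hqnd
    simp only [List.nodup_cons, List.mem_cons, List.not_mem_nil, or_false,
      List.mem_singleton, not_or, List.nodup_nil, and_true] at hpnd hqnd
    refine ⟨p, q, hp, hq, by omega, by omega, hpq, ?_⟩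
    intro x
    rw [hps, hqs]
    simp only [List.mem_cons, List.not_mem_nil, or_false, List.mem_singleton]
    constructor
    · rintro ⟨hx1, hx2⟩
      rcases hx1 with rfl | rfl | rfl
      · exact Or.inl rfl
      · rcases hx2 with h | h | h
        · exact Or.inl h
        · exact absurd h hm
        · exact Or.inr h
      · exact Or.inr rfl
    · rintro (rfl | rfl) <;> tauto
  · -- inductive step: d ≥ 3
    obtain ⟨R, hR, hRlen⟩ := hr.exists_path_of_dist
    rw [hd] at hRlen
    obtain ⟨x, hvx, s, hsdef⟩ := notNil_decomp R.reverse hne.symm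
    have hsrev : (Walk.cons hvx s).IsPath := hsdef ▸ hR.reverse
    rw [Walk.cons_isPath_iff] at hsrev
    obtain ⟨hs, hvs⟩ := hsrev
    have hslen : s.length = d - 1 := by
      have := congrArg Walk.length hsdef
      rw [Walk.length_reverse, hRlen, Walk.length_cons] at this
      omega
    have hxv : G.Adj x v := hvx.symm
    have hdux : G.dist u x = d - 1 := by
      have h1 : G.dist u x ≤ d - 1 := by
        have := SimpleGraph.dist_le s.reverse
        rwa [Walk.length_reverse, hslen] at this
      have h2 : G.dist u v ≤ G.dist u x + G.dist x v :=
        dist_triangle' ⟨s.reverse⟩ ⟨hxv.toWalk⟩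
      have h3 : G.dist x v ≤ 1 := by
        have := SimpleGraph.dist_le hxv.toWalk
        simpa using this
      omega
    have hux : u ≠ x := by
      rintro rfl
      rw [SimpleGraph.dist_self] at hdux
      omega
    have hnadjux : ¬ G.Adj u x := by
      intro h
      rw [← SimpleGraph.dist_eq_one_iff_adj] at h
      omega
    obtain ⟨P₁, P₂, hP₁, hP₂, hP₁l, hP₂l, hPne, hPdisj⟩ :=
      ih (d - 1) (by omega) u x hdux hux hnadjux ⟨s.reverse⟩
    rw [hdux] at hP₁l hP₂l
    -- v is not on P₁ or P₂
    have hvP : ∀ (P : G.Walk u x), P.length = d - 1 → v ∉ P.support := by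
      intro P hPl hvmem
      have := dist_add_dist_le_of_mem_support P hvmem
      rw [hPl, hd] at this
      omega
    have hvP₁ := hvP P₁ hP₁l
    have hvP₂ := hvP P₂ hP₂l
    -- extend P₂ by the edge x-v
    set P₂' : G.Walk u v := (Walk.cons hvx P₂.reverse).reverse with hP₂'def
    have hP₂'path : P₂'.IsPath := by
      apply Walk.IsPath.reverse
      rw [Walk.cons_isPath_iff]
      refine ⟨hP₂.reverse, ?_⟩
      rw [Walk.support_reverse, List.mem_reverse]
      exact hvP₂
    have hP₂'len : P₂'.length = d := by
      rw [hP₂'def, Walk.length_reverse, Walk.length_cons, Walk.length_reverse]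
      omega
    have hP₂'supp : ∀ z, z ∈ P₂'.support ↔ z = v ∨ z ∈ P₂.support := by
      intro z
      rw [hP₂'def, Walk.support_reverse, List.mem_reverse, Walk.support_cons,
        List.mem_cons, Walk.support_reverse, List.mem_reverse]
    -- predecessor a of x on P₁
    obtain ⟨a, hxa, r₁, hr₁def⟩ := notNil_decomp P₁.reverse hux.symm
    have hr₁path : (Walk.cons hxa r₁).IsPath := hr₁def ▸ hP₁.reverse
    rw [Walk.cons_isPath_iff] at hr₁path
    obtain ⟨hr₁, hxr₁⟩ := hr₁path
    have hr₁len : r₁.length = d - 2 := by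
      have := congrArg Walk.length hr₁def
      rw [Walk.length_reverse, hP₁l, Walk.length_cons] at this
      omega
    have hr₁sub : ∀ z, z ∈ r₁.support → z ∈ P₁.support := by
      intro z hz
      have : z ∈ P₁.reverse.support := by
        rw [hr₁def, Walk.support_cons]
        exact List.mem_cons_of_mem _ hz
      rwa [Walk.support_reverse, List.mem_reverse] at this
    have hdua : G.dist u a ≤ d - 2 := by
      have := SimpleGraph.dist_le r₁.reverse
      rwa [Walk.length_reverse, hr₁len] at this
    have hdav : G.dist a v = 2 := by
      have h1 : G.dist a v ≤ 2 := by
        have := SimpleGraph.dist_le (Walk.cons hxa.symm (Walk.cons hxv Walk.nil))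
        simpa using this
      have h2 : G.dist u v ≤ G.dist u a + G.dist a v :=
        dist_triangle' ⟨r₁.reverse⟩ ⟨Walk.cons hxa.symm (Walk.cons hxv Walk.nil)⟩
      omega
    obtain ⟨m₁, m₂, hm, ham₁, hm₁v, ham₂, hm₂v⟩ := two_midpoints hC hdav
    -- pick a midpoint different from x
    obtain ⟨y, hay, hyv, hyx⟩ : ∃ y, G.Adj a y ∧ G.Adj y v ∧ y ≠ x := by
      by_cases h : m₁ = x
      · exact ⟨m₂, ham₂, hm₂v, by rintro rfl; exact hm h⟩
      · exact ⟨m₁, ham₁, hm₁v, h⟩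
    -- y is not on P₁ or P₂
    have hduy : G.dist u y = d - 1 := by
      have h1 : G.dist u y ≤ G.dist u a + 1 := by
        have h2 : G.dist u y ≤ G.dist u a + G.dist a y :=
          dist_triangle' ⟨r₁.reverse⟩ ⟨hay.toWalk⟩
        have h3 : G.dist a y ≤ 1 := by simpa using SimpleGraph.dist_le hay.toWalk
        omega
      have h4 : G.dist u v ≤ G.dist u y + 1 := by
        have h5 : G.dist u v ≤ G.dist u y + G.dist y v :=
          dist_triangle' ⟨r₁.reverse.append hay.toWalk⟩ ⟨hyv.toWalk⟩
        have h6 : G.dist y v ≤ 1 := by simpa using SimpleGraph.dist_le hyv.toWalk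
        omega
      omega
    have hyP : ∀ (P : G.Walk u x), P.length = d - 1 → y ∉ P.support := by
      intro P hPl hymem
      have h1 := dist_add_dist_le_of_mem_support P hymem
      rw [hPl, hduy] at h1
      have h2 : G.dist y x = 0 := by omega
      rcases SimpleGraph.dist_eq_zero_iff_eq_or_not_reachable.mp h2 with h | h
      · exact hyx h
      · exact h ⟨P.dropUntil y hymem⟩
    have hyP₁ := hyP P₁ hP₁l
    have hyP₂ := hyP P₂ hP₂l
    have hyr₁ : y ∉ r₁.support := fun h => hyP₁ (hr₁sub y h)
    have hvr₁ : v ∉ r₁.support := fun h => hvP₁ (hr₁sub v h)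
    have hyv' : y ≠ v := hyv.ne
    -- the new path
    set Pnew : G.Walk u v := (Walk.cons hyv.symm (Walk.cons hay.symm r₁)).reverse
      with hPnewdef
    have hPnewpath : Pnew.IsPath := by
      apply Walk.IsPath.reverse
      rw [Walk.cons_isPath_iff, Walk.cons_isPath_iff]
      refine ⟨⟨hr₁, hyr₁⟩, ?_⟩
      rw [Walk.support_cons, List.mem_cons]
      push_neg
      exact ⟨fun h => hyv' h.symm, hvr₁⟩
    have hPnewlen : Pnew.length = d := by
      rw [hPnewdef, Walk.length_reverse, Walk.length_cons, Walk.length_cons]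
      omega
    have hPnewsupp : ∀ z, z ∈ Pnew.support ↔ z = v ∨ z = y ∨ z ∈ r₁.support := by
      intro z
      rw [hPnewdef, Walk.support_reverse, List.mem_reverse, Walk.support_cons,
        Walk.support_cons, List.mem_cons, List.mem_cons]
    have hyPnew : y ∈ Pnew.support := (hPnewsupp y).mpr (Or.inr (Or.inl rfl))
    have hyP₂' : y ∉ P₂'.support := by
      rw [hP₂'supp]
      push_neg
      exact ⟨hyv', hyP₂⟩
    refine ⟨Pnew, P₂', hPnewpath, hP₂'path, by omega, by omega, ?_, ?_⟩
    · intro h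
      rw [h] at hyPnew
      exact hyP₂' hyPnew
    · intro z
      constructor
      · rintro ⟨hz1, hz2⟩
        rw [hPnewsupp] at hz1
        rw [hP₂'supp] at hz2
        rcases hz1 with rfl | rfl | hz1
        · exact Or.inr rfl
        · rcases hz2 with h | h
          · exact absurd h hyv'
          · exact absurd h hyP₂
        · rcases hz2 with rfl | hz2
          · exact absurd (hr₁sub z hz1) hvP₁
          · rcases (hPdisj z).mp ⟨hr₁sub z hz1, hz2⟩ with rfl | rfl
            · exact Or.inl rfl
            · exact absurd hz1 hxr₁
      · rintro (rfl | rfl)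
        · exact ⟨(hPnewsupp z).mpr (Or.inr (Or.inr r₁.end_mem_support)),
            (hP₂'supp z).mpr (Or.inr P₂.start_mem_support)⟩
        · exact ⟨(hPnewsupp z).mpr (Or.inl rfl), (hP₂'supp z).mpr (Or.inl rfl)⟩

end STrivialAux


/-- `G` is s-trivial if every stress interval is contained in its endpoints. -/
def SimpleGraph.STrivial {V : Type*} (G : SimpleGraph V) : Prop :=
  ∀ u v : V, G.stressInterval u v ⊆ {u, v}

/-- the following are equivalent for a finite simple graph `G`:
(a) `G` is s-trivial;
(b) any two distinct non-adjacent vertices in the same component are joined by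
    at least two internally disjoint shortest paths;
(c) any two vertices at distance 2 are joined by at least two distinct shortest paths. -/
theorem sTrivial_tfae {V : Type*} [Fintype V] (G : SimpleGraph V) :
    List.TFAE
      [ G.STrivial,
        ∀ u v : V, u ≠ v → ¬ G.Adj u v → G.Reachable u v →
          ∃ p q : G.Walk u v, p.IsPath ∧ q.IsPath ∧
            p.length = G.dist u v ∧ q.length = G.dist u v ∧ p ≠ q ∧
            (∀ x : V, (x ∈ p.support ∧ x ∈ q.support) ↔ (x = u ∨ x = v)),
        ∀ u v : V, G.dist u v = 2 →
          ∃ p q : G.Walk u v, p.IsPath ∧ q.IsPath ∧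
            p.length = 2 ∧ q.length = 2 ∧ p ≠ q ] := by
  classical
  tfae_have 1 → 3 := by
    intro hA u v hd
    have hr : G.Reachable u v := by
      by_contra hnr
      rw [SimpleGraph.dist_eq_zero_of_not_reachable hnr] at hd
      simp at hd
    obtain ⟨p, hp, hlen⟩ := hr.exists_path_of_dist
    by_contra hno
    push_neg at hno
    obtain ⟨m, h1, h2, hpdef⟩ := STrivialAux.length_two_decomp p (hlen.trans hd)
    have hm : m ∈ G.stressInterval u v := by
      refine ⟨hr, fun q hq hql => ?_⟩
      have hqp : q = p := hno q p hq hp (hql.trans hd) (hlen.trans hd)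
      rw [hqp, hpdef]; simp
    have hmem := hA u v hm
    simp only [Set.mem_insert_iff, Set.mem_singleton_iff] at hmem
    rcases hmem with rfl | rfl
    · exact h1.ne rfl
    · exact h2.ne rfl
  tfae_have 3 → 1 := by
    intro hC u v x hx
    obtain ⟨hr, hall⟩ := hx
    by_contra hxuv
    simp only [Set.mem_insert_iff, Set.mem_singleton_iff] at hxuv
    push_neg at hxuv
    obtain ⟨hxu, hxv⟩ := hxuv
    obtain ⟨p, hp, hlen⟩ := hr.exists_path_of_dist
    have hxp := hall p hp hlen
    have hspec := p.take_spec hxp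
    have hp1 : (p.takeUntil x hxp).IsPath := hp.takeUntil hxp
    have hp2 : (p.dropUntil x hxp).IsPath := hp.dropUntil hxp
    have hlensum : (p.takeUntil x hxp).length + (p.dropUntil x hxp).length = G.dist u v := by
      have h := congrArg SimpleGraph.Walk.length hspec
      rw [SimpleGraph.Walk.length_append] at h
      rw [h, hlen]
    obtain ⟨a, hxa, r, hrdef⟩ := STrivialAux.notNil_decomp (p.takeUntil x hxp).reverse hxu
    have hrpath : (SimpleGraph.Walk.cons hxa r).IsPath := hrdef ▸ hp1.reverse
    rw [SimpleGraph.Walk.cons_isPath_iff] at hrpath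
    obtain ⟨hrP, hxr⟩ := hrpath
    have hrlen : r.length + 1 = (p.takeUntil x hxp).length := by
      have h := congrArg SimpleGraph.Walk.length hrdef
      rw [SimpleGraph.Walk.length_reverse, SimpleGraph.Walk.length_cons] at h
      omega
    obtain ⟨b, hxb, t, htdef⟩ := STrivialAux.notNil_decomp (p.dropUntil x hxp) hxv
    have htpath : (SimpleGraph.Walk.cons hxb t).IsPath := htdef ▸ hp2
    rw [SimpleGraph.Walk.cons_isPath_iff] at htpath
    obtain ⟨htP, hxt⟩ := htpath
    have htlen : t.length + 1 = (p.dropUntil x hxp).length := by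
      have h := congrArg SimpleGraph.Walk.length htdef
      rw [SimpleGraph.Walk.length_cons] at h
      omega
    have hdab : G.dist a b = 2 := by
      have h1 : G.dist a b ≤ 2 := by
        have h := SimpleGraph.dist_le
          (SimpleGraph.Walk.cons hxa.symm (SimpleGraph.Walk.cons hxb SimpleGraph.Walk.nil))
        simpa using h
      have hab : a ≠ b := by
        rintro rfl
        have h := SimpleGraph.dist_le (r.reverse.append t)
        rw [SimpleGraph.Walk.length_append, SimpleGraph.Walk.length_reverse] at h
        omega
      have hnadj : ¬ G.Adj a b := by
        intro hadj
        have h := SimpleGraph.dist_le (r.reverse.append (SimpleGraph.Walk.cons hadj t))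
        rw [SimpleGraph.Walk.length_append, SimpleGraph.Walk.length_reverse,
          SimpleGraph.Walk.length_cons] at h
        omega
      have h0 : G.dist a b ≠ 0 := by
        intro h
        rcases SimpleGraph.dist_eq_zero_iff_eq_or_not_reachable.mp h with h' | h'
        · exact hab h'
        · exact h' ⟨SimpleGraph.Walk.cons hxa.symm (SimpleGraph.Walk.cons hxb SimpleGraph.Walk.nil)⟩
      have h1' : G.dist a b ≠ 1 := fun h => hnadj (SimpleGraph.dist_eq_one_iff_adj.mp h)
      omega
    obtain ⟨m₁, m₂, hm, ham₁, hm₁b, ham₂, hm₂b⟩ := STrivialAux.two_midpoints hC hdab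
    obtain ⟨y, hay, hyb, hyx⟩ : ∃ y, G.Adj a y ∧ G.Adj y b ∧ y ≠ x := by
      by_cases h : m₁ = x
      · exact ⟨m₂, ham₂, hm₂b, by rintro rfl; exact hm h⟩
      · exact ⟨m₁, ham₁, hm₁b, h⟩
    set W : G.Walk u v := r.reverse.append
      (SimpleGraph.Walk.cons hay (SimpleGraph.Walk.cons hyb t)) with hWdef
    have hWlen : W.length = G.dist u v := by
      rw [hWdef, SimpleGraph.Walk.length_append, SimpleGraph.Walk.length_reverse,
        SimpleGraph.Walk.length_cons, SimpleGraph.Walk.length_cons]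
      omega
    have hxW : x ∉ W.support := by
      rw [hWdef, SimpleGraph.Walk.mem_support_append_iff]
      push_neg
      constructor
      · rw [SimpleGraph.Walk.support_reverse, List.mem_reverse]
        exact hxr
      · rw [SimpleGraph.Walk.support_cons, SimpleGraph.Walk.support_cons]
        simp only [List.mem_cons, not_or]
        exact ⟨hxa.ne, fun h => hyx h.symm, hxt⟩
    have hBlen : W.bypass.length = G.dist u v := by
      have h1 := SimpleGraph.Walk.length_bypass_le W
      have h2 := SimpleGraph.dist_le W.bypass
      omega
    have hxB := hall W.bypass W.bypass_isPath hBlen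
    exact hxW (SimpleGraph.Walk.support_bypass_subset W hxB)
  tfae_have 3 → 2 := by
    intro hC u v hne hadj hr
    exact STrivialAux.key hC (G.dist u v) u v rfl hne hadj hr
  tfae_have 2 → 3 := by
    intro hB u v hd
    have hr : G.Reachable u v := by
      by_contra hnr
      rw [SimpleGraph.dist_eq_zero_of_not_reachable hnr] at hd
      simp at hd
    have hne : u ≠ v := by
      rintro rfl
      rw [SimpleGraph.dist_self] at hd
      simp at hd
    have hadj : ¬ G.Adj u v := by
      intro h
      rw [← SimpleGraph.dist_eq_one_iff_adj] at h
      omega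
    obtain ⟨p, q, hp, hq, hpl, hql, hpq, -⟩ := hB u v hne hadj hr
    exact ⟨p, q, hp, hq, hpl.trans hd, hql.trans hd, hpq⟩
  tfae_finish
end

section
/- Let G be a finite simple graph, let u, v be vertices of G, and let a ∈ S(u,v) \ {u,v}. Then there exist vertices x and y, both adjacent to a in G, such that a ∈ S(x,y). -/
/-- if `a ∈ S(u,v) \ {u,v}`, then there are neighbors `x, y` of `a`
with `a ∈ S(x,y)`. -/
theorem exists_neighbors_mem_stressInterval {V : Type*} [Fintype V]
    (G : SimpleGraph V) (u v a : V)
    (ha : a ∈ G.stressInterval u v) (hau : a ≠ u) (hav : a ≠ v) :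
    ∃ x y : V, G.Adj a x ∧ G.Adj a y ∧ a ∈ G.stressInterval x y := by
  classical
  obtain ⟨hreach, hall⟩ := ha
  obtain ⟨p, hp, hlen⟩ := hreach.exists_path_of_dist
  have hasup : a ∈ p.support := hall p hp hlen
  have hspec := p.take_spec hasup
  set q1 := p.takeUntil a hasup with hq1def
  set q2 := p.dropUntil a hasup with hq2def
  have hq1path : q1.IsPath := hp.takeUntil hasup
  have hq2path : q2.IsPath := hp.dropUntil hasup
  obtain ⟨x, hx, r, hq1r⟩ := q1.reverse.exists_eq_cons_of_ne hau
  obtain ⟨y, hy, s, hq2c⟩ := q2.exists_eq_cons_of_ne hav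
  have hq1rpath : (SimpleGraph.Walk.cons hx r).IsPath := hq1r ▸ hq1path.reverse
  have hq2cpath : (SimpleGraph.Walk.cons hy s).IsPath := hq2c ▸ hq2path
  rw [SimpleGraph.Walk.cons_isPath_iff] at hq1rpath hq2cpath
  have har : a ∉ r.support := hq1rpath.2
  have has : a ∉ s.support := hq2cpath.2
  have hlen1 : q1.length = r.length + 1 := by
    have := congrArg SimpleGraph.Walk.length hq1r
    simpa using this
  have hlen2 : q2.length = s.length + 1 := by
    have := congrArg SimpleGraph.Walk.length hq2c
    simpa using this
  have hlenp : q1.length + q2.length = p.length := by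
    have := congrArg SimpleGraph.Walk.length hspec
    simpa [SimpleGraph.Walk.length_append] using this
  have hdxy : G.dist x y ≤ 2 := by
    simpa using G.dist_le (SimpleGraph.Walk.cons hx.symm (SimpleGraph.Walk.cons hy SimpleGraph.Walk.nil))
  refine ⟨x, y, hx, hy, ⟨⟨SimpleGraph.Walk.cons hx.symm (SimpleGraph.Walk.cons hy SimpleGraph.Walk.nil)⟩, ?_⟩⟩
  intro q hq hqlen
  by_contra hna
  set w : G.Walk u v := r.reverse.append (q.append s) with hwdef
  have hwlen : w.length = r.length + (q.length + s.length) := by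
    simp [hwdef, SimpleGraph.Walk.length_append]
  have hwle : w.length ≤ G.dist u v := by
    omega
  have hwge : G.dist u v ≤ w.length := G.dist_le w
  have hbp : a ∈ w.bypass.support := by
    refine hall w.bypass w.bypass_isPath ?_
    have h1 := SimpleGraph.Walk.length_bypass_le w
    have h2 := G.dist_le w.bypass
    omega
  have haw : a ∈ w.support := SimpleGraph.Walk.support_bypass_subset w hbp
  rw [hwdef, SimpleGraph.Walk.mem_support_append_iff,
    SimpleGraph.Walk.mem_support_append_iff, SimpleGraph.Walk.support_reverse,
    List.mem_reverse] at haw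
  tauto
end

section
/- For a finite simple graph G of order n, the following statements are equivalent: (a) sn(G) = n; (b) every vertex of G is s-extreme, i.e., Ext_s(G) = V(G); (c) G is s-trivial. -/
/-- The stress number: minimum cardinality of a set `U` with
`⋃_{u,v ∈ U} S(u,v) = V(G)`. -/
noncomputable def SimpleGraph.stressNumber {V : Type*} (G : SimpleGraph V) : ℕ :=
  sInf {n | ∃ U : Set V,
    (⋃ u ∈ U, ⋃ v ∈ U, G.stressInterval u v) = Set.univ ∧ U.ncard = n}

/-- The stress convex hull of `U`: the smallest stress convex set containing `U`. -/
def SimpleGraph.stressHull {V : Type*} (G : SimpleGraph V) (U : Set V) : Set V :=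
  ⋂₀ {W : Set V | G.IsStressConvex W ∧ U ⊆ W}

/-- The stress hull number: minimum cardinality of a set whose stress convex hull
is the whole vertex set. -/
noncomputable def SimpleGraph.stressHullNumber {V : Type*} (G : SimpleGraph V) : ℕ :=
  sInf {n | ∃ U : Set V, G.stressHull U = Set.univ ∧ U.ncard = n}

/-- A vertex is s-extreme if its complement is stress convex. -/
def SimpleGraph.IsSExtreme {V : Type*} (G : SimpleGraph V) (v : V) : Prop :=
  G.IsStressConvex {v}ᶜ

/-- for a finite graph `G` of order `n`, the following are equivalent:
(a) `sn(G) = n`; (b) every vertex of `G` is s-extreme; (c) `G` is s-trivial. -/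
theorem stressNumber_eq_card_tfae {V : Type*} [Fintype V]
    (G : SimpleGraph V) (n : ℕ) (hn : Fintype.card V = n) :
    List.TFAE
      [ G.stressNumber = n,
        {v : V | G.IsSExtreme v} = Set.univ,
        G.STrivial ] := by

  classical
  have hself : ∀ x : V, x ∈ G.stressInterval x x := fun x =>
    ⟨SimpleGraph.Reachable.refl x, fun p _ _ => p.start_mem_support⟩
  tfae_have 3 → 2
  · intro h
    ext v
    simp only [Set.mem_setOf_eq, Set.mem_univ, iff_true]
    intro u hu w hw x hx
    rcases h u w hx with rfl | rfl
    · exact hu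
    · exact hw
  tfae_have 2 → 3
  · intro h u v x hx
    by_contra hc
    simp only [Set.mem_insert_iff, Set.mem_singleton_iff, not_or] at hc
    have hext : G.IsSExtreme x := by
      rw [Set.eq_univ_iff_forall] at h; exact h x
    have hu : u ∈ ({x}ᶜ : Set V) := by
      simp only [Set.mem_compl_iff, Set.mem_singleton_iff]
      exact fun h' => hc.1 h'.symm
    have hv : v ∈ ({x}ᶜ : Set V) := by
      simp only [Set.mem_compl_iff, Set.mem_singleton_iff]
      exact fun h' => hc.2 h'.symm
    exact hext hu hv hx rfl
  tfae_have 3 → 1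
  · intro h
    have hS : {m | ∃ U : Set V,
        (⋃ u ∈ U, ⋃ v ∈ U, G.stressInterval u v) = Set.univ ∧ U.ncard = m} = {n} := by
      ext m
      simp only [Set.mem_setOf_eq, Set.mem_singleton_iff]
      constructor
      · rintro ⟨U, hU, rfl⟩
        have hUuniv : U = Set.univ := by
          rw [Set.eq_univ_iff_forall]
          intro y
          have : y ∈ (⋃ u ∈ U, ⋃ v ∈ U, G.stressInterval u v) := hU ▸ Set.mem_univ y
          simp only [Set.mem_iUnion] at this
          obtain ⟨u, hu, v, hv, hy⟩ := this
          rcases h u v hy with rfl | rfl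
          · exact hu
          · exact hv
        rw [hUuniv, Set.ncard_univ, Nat.card_eq_fintype_card, hn]
      · rintro rfl
        refine ⟨Set.univ, ?_, by rw [Set.ncard_univ, Nat.card_eq_fintype_card, hn]⟩
        ext x
        simp only [Set.mem_iUnion, Set.mem_univ, iff_true]
        exact ⟨x, trivial, x, trivial, hself x⟩
    rw [SimpleGraph.stressNumber, hS, csInf_singleton]
  tfae_have 1 → 3
  · intro h1
    by_contra hc
    rw [SimpleGraph.STrivial] at hc
    push_neg at hc
    obtain ⟨u, v, hc⟩ := hc
    rw [Set.not_subset] at hc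
    obtain ⟨x, hx, hxne⟩ := hc
    simp only [Set.mem_insert_iff, Set.mem_singleton_iff, not_or] at hxne
    have hmem : n - 1 ∈ {m | ∃ U : Set V,
        (⋃ u ∈ U, ⋃ v ∈ U, G.stressInterval u v) = Set.univ ∧ U.ncard = m} := by
      refine ⟨{x}ᶜ, ?_, ?_⟩
      · ext y
        simp only [Set.mem_iUnion, Set.mem_univ, iff_true]
        by_cases hy : y = x
        · subst hy
          exact ⟨u, fun h' => hxne.1 (Set.mem_singleton_iff.mp h').symm,
                 v, fun h' => hxne.2 (Set.mem_singleton_iff.mp h').symm, hx⟩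
        · exact ⟨y, hy, y, hy, hself y⟩
      · have h2 := Set.ncard_add_ncard_compl ({x} : Set V)
        rw [Set.ncard_singleton, Nat.card_eq_fintype_card, hn] at h2
        omega
    have hle := Nat.sInf_le hmem
    have hpos : 1 ≤ n := by
      rw [← hn]
      exact Fintype.card_pos_iff.mpr ⟨x⟩
    rw [SimpleGraph.stressNumber] at h1
    omega
  tfae_finish
end

section
/- For finite simple graphs G and H, the stress number of the Cartesian product satisfies sn(G □ H) ≤ min{ sn(G)·|V(H)|, sn(H)·|V(G)| }. -/
/-! A stress set `U` of `G` gives the stress set `U × V(H)` of `G □ H`. Indeed, distances in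
`G □ H` are sums of distances in the factors, so a shortest walk between `(u, b)` and `(v, b)`
makes no step in the `H`-direction: it stays in the layer `V(G) × {b}`, and its projection is a
shortest `u,v`-walk of `G`, which passes through every vertex of `S(u, v)`. The other bound
follows from `G □ H ≃ H □ G`. -/

namespace SimpleGraph

variable {α β : Type*}

namespace Walk

variable {G : SimpleGraph α} {H : SimpleGraph β}

theorem exists_mem_support_of_mem_support_ofBoxProdLeft [DecidableEq β] [DecidableRel G.Adj]
    {x y : α × β} (w : (G □ H).Walk x y) {a : α} (ha : a ∈ w.ofBoxProdLeft.support) :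
    ∃ b, (a, b) ∈ w.support := by
  induction w with
  | @nil u => exact ⟨u.2, by simp_all [ofBoxProdLeft]⟩
  | @cons x c y h w ih =>
    unfold ofBoxProdLeft Or.by_cases at ha
    by_cases hG : G.Adj x.1 c.1 ∧ x.2 = c.2
    · rw [dif_pos hG, support_cons, List.mem_cons] at ha
      rcases ha with rfl | ha
      · exact ⟨x.2, by simp⟩
      · obtain ⟨b, hb⟩ := ih ha
        exact ⟨b, by simp [hb]⟩
    · rw [dif_neg hG] at ha
      change a ∈ (w.ofBoxProdLeft.copy _ rfl).support at ha
      rw [support_copy] at ha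
      obtain ⟨b, hb⟩ := ih ha
      exact ⟨b, by simp [hb]⟩

theorem snd_eq_of_length_ofBoxProdRight_eq_zero [DecidableEq α] [DecidableRel H.Adj]
    {x y : α × β} (w : (G □ H).Walk x y) (hw : w.ofBoxProdRight.length = 0) {z : α × β}
    (hz : z ∈ w.support) : z.2 = y.2 := by
  induction w generalizing z with
  | nil => simp_all
  | @cons x c y h w ih =>
    unfold ofBoxProdRight Or.by_cases at hw
    by_cases hH : H.Adj x.2 c.2 ∧ x.1 = c.1
    · simp [dif_pos hH] at hw
    · rw [dif_neg hH] at hw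
      change (w.ofBoxProdRight.copy _ rfl).length = 0 at hw
      rw [length_copy] at hw
      rw [support_cons, List.mem_cons] at hz
      rcases hz with rfl | hz
      · exact (h.resolve_right hH).2.trans (ih hw w.start_mem_support)
      · exact ih hw hz

end Walk

variable {G : SimpleGraph α} {G' : SimpleGraph β} {H : SimpleGraph β}

theorem edist_map_le (f : G →g G') (u v : α) : G'.edist (f u) (f v) ≤ G.edist u v :=
  le_iInf fun p => (edist_le (p.map f)).trans_eq (by rw [Walk.length_map])

theorem Iso.dist_eq (e : G ≃g G') (u v : α) : G'.dist (e u) (e v) = G.dist u v := by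
  have hle : G'.edist (e u) (e v) ≤ G.edist u v := edist_map_le e.toHom u v
  have hge : G.edist u v ≤ G'.edist (e u) (e v) := by
    simpa using edist_map_le e.symm.toHom (e u) (e v)
  exact congrArg ENat.toNat (hle.antisymm hge)

theorem mem_stressInterval_iff {u v x : α} :
    x ∈ G.stressInterval u v ↔
      G.Reachable u v ∧ ∀ p : G.Walk u v, p.length = G.dist u v → x ∈ p.support :=
  and_congr_right fun _ =>
    ⟨fun h p hp => h p (p.isPath_of_length_eq_dist hp) hp, fun h p _ hp => h p hp⟩

theorem Iso.apply_mem_stressInterval (e : G ≃g G') {u v x : α}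
    (hx : x ∈ G.stressInterval u v) : e x ∈ G'.stressInterval (e u) (e v) := by
  rw [mem_stressInterval_iff] at hx ⊢
  refine ⟨hx.1.map e.toHom, fun p hp => ?_⟩
  let q : G.Walk u v :=
    (p.map e.symm.toHom).copy (e.symm_apply_apply u) (e.symm_apply_apply v)
  have hq : q.length = G.dist u v := by simp [q, hp, e.dist_eq]
  have hxq := hx.2 q hq
  simp only [q, Walk.support_copy, Walk.support_map, List.mem_map] at hxq
  obtain ⟨y, hy, rfl⟩ := hxq
  simpa using hy

def IsStressSet (G : SimpleGraph α) (U : Set α) : Prop :=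
  ⋃ u ∈ U, ⋃ v ∈ U, G.stressInterval u v = Set.univ

theorem isStressSet_iff {U : Set α} :
    G.IsStressSet U ↔ ∀ x, ∃ u ∈ U, ∃ v ∈ U, x ∈ G.stressInterval u v := by
  simp [IsStressSet, Set.eq_univ_iff_forall]

theorem isStressSet_univ (G : SimpleGraph α) : G.IsStressSet Set.univ :=
  isStressSet_iff.2 fun x =>
    ⟨x, trivial, x, trivial,
      mem_stressInterval_iff.2 ⟨.refl x, fun p _ => p.start_mem_support⟩⟩

theorem stressNumber_le_ncard {U : Set α} (hU : G.IsStressSet U) :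
    G.stressNumber ≤ U.ncard :=
  Nat.sInf_le ⟨U, hU, rfl⟩

theorem exists_isStressSet_ncard_eq_stressNumber (G : SimpleGraph α) :
    ∃ U, G.IsStressSet U ∧ U.ncard = G.stressNumber :=
  Nat.sInf_mem (s := {n | ∃ U : Set α, G.IsStressSet U ∧ U.ncard = n})
    ⟨_, _, isStressSet_univ G, rfl⟩

theorem IsStressSet.image_iso {U : Set α} (hU : G.IsStressSet U) (e : G ≃g G') :
    G'.IsStressSet (e '' U) := by
  refine isStressSet_iff.2 fun y => ?_
  obtain ⟨u, hu, v, hv, hy⟩ := isStressSet_iff.1 hU (e.symm y)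
  exact ⟨e u, Set.mem_image_of_mem e hu, e v, Set.mem_image_of_mem e hv,
    by simpa using e.apply_mem_stressInterval hy⟩

theorem Iso.stressNumber_le (e : G ≃g G') : G'.stressNumber ≤ G.stressNumber := by
  obtain ⟨U, hU, hcard⟩ := G.exists_isStressSet_ncard_eq_stressNumber
  calc G'.stressNumber ≤ (e '' U).ncard := stressNumber_le_ncard (hU.image_iso e)
    _ = G.stressNumber := by rw [Set.ncard_image_of_injective U e.injective, hcard]

theorem dist_boxProd_same_snd (a₁ a₂ : α) (b : β) :
    (G □ H).dist (a₁, b) (a₂, b) = G.dist a₁ a₂ := by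
  simp [dist, edist_boxProd]

theorem mem_stressInterval_boxProd_left {u v x : α} (hx : x ∈ G.stressInterval u v) (b : β) :
    (x, b) ∈ (G □ H).stressInterval (u, b) (v, b) := by
  classical
  rw [mem_stressInterval_iff] at hx ⊢
  obtain ⟨hr, hx⟩ := hx
  refine ⟨hr.map (G.boxProdLeft H b).toHom, fun p hp => ?_⟩
  have hlen := p.length_boxProd
  rw [hp, dist_boxProd_same_snd] at hlen
  have hL : p.ofBoxProdLeft.length = G.dist u v := le_antisymm (by omega) (dist_le _)
  obtain ⟨b', hb'⟩ := p.exists_mem_support_of_mem_support_ofBoxProdLeft (hx _ hL)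
  have hb : b' = b := p.snd_eq_of_length_ofBoxProdRight_eq_zero (by omega) hb'
  rwa [hb] at hb'

theorem IsStressSet.prod_univ {U : Set α} (hU : G.IsStressSet U) :
    (G □ H).IsStressSet (U ×ˢ Set.univ) := by
  refine isStressSet_iff.2 fun ⟨x, b⟩ => ?_
  obtain ⟨u, hu, v, hv, hx⟩ := isStressSet_iff.1 hU x
  exact ⟨(u, b), ⟨hu, trivial⟩, (v, b), ⟨hv, trivial⟩,
    mem_stressInterval_boxProd_left hx b⟩

theorem stressNumber_boxProd_le_mul_card (G : SimpleGraph α) (H : SimpleGraph β) :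
    (G □ H).stressNumber ≤ G.stressNumber * Nat.card β := by
  obtain ⟨U, hU, hcard⟩ := G.exists_isStressSet_ncard_eq_stressNumber
  calc (G □ H).stressNumber ≤ (U ×ˢ (Set.univ : Set β)).ncard :=
        stressNumber_le_ncard (hU.prod_univ (H := H))
    _ = G.stressNumber * Nat.card β := by rw [Set.ncard_prod, Set.ncard_univ, hcard]

end SimpleGraph

/-- the stress number of a Cartesian (box) product satisfies
`sn(G □ H) ≤ min{sn(G)·|V(H)|, sn(H)·|V(G)|}`. -/
theorem stressNumber_boxProd_le {V W : Type*} [Fintype V] [Fintype W]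
    (G : SimpleGraph V) (H : SimpleGraph W) :
    (G.boxProd H).stressNumber ≤
      min (G.stressNumber * Fintype.card W) (H.stressNumber * Fintype.card V) := by
  rw [← Nat.card_eq_fintype_card, ← Nat.card_eq_fintype_card]
  refine le_min (G.stressNumber_boxProd_le_mul_card H) ?_
  calc (G.boxProd H).stressNumber ≤ (H.boxProd G).stressNumber :=
        (SimpleGraph.boxProdComm H G).stressNumber_le
    _ ≤ H.stressNumber * Nat.card V := H.stressNumber_boxProd_le_mul_card G
end

section
/- Let G and H be finite simple graphs and let g, g' be vertices of G and h, h' be vertices of H with g ≠ g' and h ≠ h'. Then in the Cartesian product G □ H, the stress interval S((g,h),(g',h')) is contained in {(g,h),(g',h')}. -/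
/-! The distance in `G □ H` is the sum of the distances in the factors, so both "L-shaped" walks,
first along `G` and then along `H` or the other way round, are shortest paths. The first one
keeps the `H`-coordinate `h` or has reached `g'`, the second one keeps `g` or has reached `h'`;
as `g ≠ g'` and `h ≠ h'`, they only share their endpoints. -/

namespace SimpleGraph

variable {α β : Type*} {G : SimpleGraph α} {H : SimpleGraph β}

lemma Reachable.dist_boxProd {x y : α × β} (hr : (G □ H).Reachable x y) :
    (G □ H).dist x y = G.dist x.1 y.1 + H.dist x.2 y.2 := by
  obtain ⟨hG, hH⟩ := reachable_boxProd.1 hr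
  have hedist := edist_boxProd (G := G) (H := H) x y
  rw [← hr.coe_dist_eq_edist, ← hG.coe_dist_eq_edist, ← hH.coe_dist_eq_edist] at hedist
  exact_mod_cast hedist

namespace Walk

lemma mem_support_of_mem_stressInterval_s16 {V : Type*} {G : SimpleGraph V} {u v x : V}
    {p : G.Walk u v} (hp : p.length = G.dist u v) (hx : x ∈ G.stressInterval u v) :
    x ∈ p.support :=
  hx.2 p (p.isPath_of_length_eq_dist hp) hp

@[simp]
lemma length_boxProdLeft {a₁ a₂ : α} (b : β) (w : G.Walk a₁ a₂) :
    (w.boxProdLeft H b).length = w.length :=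
  w.length_map _

@[simp]
lemma length_boxProdRight {b₁ b₂ : β} (a : α) (w : H.Walk b₁ b₂) :
    (w.boxProdRight G a).length = w.length :=
  w.length_map _

lemma support_boxProdLeft {a₁ a₂ : α} (b : β) (w : G.Walk a₁ a₂) :
    (w.boxProdLeft H b).support = w.support.map (·, b) :=
  w.support_map _

lemma support_boxProdRight {b₁ b₂ : β} (a : α) (w : H.Walk b₁ b₂) :
    (w.boxProdRight G a).support = w.support.map (a, ·) :=
  w.support_map _

lemma mem_support_boxProdLeft_append_boxProdRight {a₁ a₂ : α} {b₁ b₂ : β} (p : G.Walk a₁ a₂)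
    (q : H.Walk b₁ b₂) {x : α × β}
    (hx : x ∈ ((p.boxProdLeft H b₁).append (q.boxProdRight G a₂)).support) :
    x.2 = b₁ ∨ x.1 = a₂ := by
  rw [mem_support_append_iff, support_boxProdLeft, support_boxProdRight, List.mem_map,
    List.mem_map] at hx
  rcases hx with ⟨a, -, rfl⟩ | ⟨b, -, rfl⟩
  exacts [.inl rfl, .inr rfl]

lemma mem_support_boxProdRight_append_boxProdLeft {a₁ a₂ : α} {b₁ b₂ : β} (p : G.Walk a₁ a₂)
    (q : H.Walk b₁ b₂) {x : α × β}
    (hx : x ∈ ((q.boxProdRight G a₁).append (p.boxProdLeft H b₂)).support) :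
    x.1 = a₁ ∨ x.2 = b₂ := by
  rw [mem_support_append_iff, support_boxProdLeft, support_boxProdRight, List.mem_map,
    List.mem_map] at hx
  rcases hx with ⟨b, -, rfl⟩ | ⟨a, -, rfl⟩
  exacts [.inl rfl, .inr rfl]

end Walk

end SimpleGraph

open SimpleGraph

theorem stressInterval_boxProd_subset_general {V W : Type*}
    (G : SimpleGraph V) (H : SimpleGraph W) (g g' : V) (h h' : W)
    (hg : g ≠ g') (hh : h ≠ h') :
    (G.boxProd H).stressInterval (g, h) (g', h') ⊆ {(g, h), (g', h')} := by
  intro x hx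
  obtain ⟨p, hp⟩ := (reachable_boxProd.1 hx.1).1.exists_walk_length_eq_dist
  obtain ⟨q, hq⟩ := (reachable_boxProd.1 hx.1).2.exists_walk_length_eq_dist
  have hdist := hx.1.dist_boxProd
  have hx₁ := Walk.mem_support_boxProdLeft_append_boxProdRight p q <|
    Walk.mem_support_of_mem_stressInterval_s16 (by simp [hp, hq, hdist]) hx
  have hx₂ := Walk.mem_support_boxProdRight_append_boxProdLeft p q <|
    Walk.mem_support_of_mem_stressInterval_s16 (by simp [hp, hq, hdist, add_comm]) hx
  rw [Set.mem_insert_iff, Set.mem_singleton_iff, Prod.ext_iff, Prod.ext_iff]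
  grind

/-- in a Cartesian (box) product, the stress interval between vertices
differing in both coordinates is contained in its endpoints. -/
theorem stressInterval_boxProd_subset {V W : Type*} [Fintype V] [Fintype W]
    (G : SimpleGraph V) (H : SimpleGraph W) (g g' : V) (h h' : W)
    (hg : g ≠ g') (hh : h ≠ h') :
    (G.boxProd H).stressInterval (g, h) (g', h') ⊆ {(g, h), (g', h')} :=
  stressInterval_boxProd_subset_general G H g g' h h' hg hh
end

section
/- If G is a split graph (a finite simple graph whose vertex set can be partitioned into a clique and an independent set), then |Ext_s(G)| = sh(G) = sn(G). -/
namespace SplitAux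
open SimpleGraph Walk

variable {V : Type*} {G : SimpleGraph V}

lemma stress_self (G : SimpleGraph V) (v : V) : v ∈ G.stressInterval v v :=
  ⟨Reachable.refl v, fun p _ _ => p.start_mem_support⟩

lemma stress_symm {u w v : V} (h : v ∈ G.stressInterval u w) :
    v ∈ G.stressInterval w u := by
  obtain ⟨hr, hall⟩ := h
  refine ⟨hr.symm, fun p hp hl => ?_⟩
  have := hall p.reverse hp.reverse (by rw [Walk.length_reverse, hl, G.dist_comm])
  simpa [Walk.support_reverse] using this

lemma eq_of_mem_stress_self {u v : V} (h : v ∈ G.stressInterval u u) : v = u := by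
  have := h.2 Walk.nil IsPath.nil (by simp [SimpleGraph.dist_self])
  simpa using this

lemma not_adj_of_mem_stress {u w v : V} (h : v ∈ G.stressInterval u w)
    (hvu : v ≠ u) (hvw : v ≠ w) : ¬ G.Adj u w := by
  intro hadj
  have hp : (Walk.cons hadj Walk.nil).IsPath := by simp [hadj.ne]
  have hl : (Walk.cons hadj Walk.nil).length = G.dist u w :=
    (SimpleGraph.dist_eq_one_iff_adj.2 hadj).symm
  have := h.2 _ hp hl
  simp at this
  tauto

lemma aux_not_mem {v w : V}
    (hv : ∀ x y, G.Adj v x → G.Adj v y → x ≠ y → G.Adj x y) (hvw : v ≠ w) :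
    ∀ {u : V} (p : G.Walk u w), p.IsPath → p.length = G.dist u w → v ≠ u → v ∉ p.support := by
  intro u p
  induction p with
  | nil => intro _ _ hvu hvs; simp at hvs; exact hvu hvs
  | @cons u b w' h q ih =>
    intro hp hl hvu hvs
    rw [Walk.support_cons, List.mem_cons] at hvs
    rcases hvs with rfl | hvs
    · exact hvu rfl
    by_cases hvb : v = b
    · subst hvb
      cases q with
      | nil => exact hvw rfl
      | @cons _ c _ h2 q2 =>
        by_cases huc : u = c
        · subst huc
          have h1 := G.dist_le q2
          have h2 : (Walk.cons h (Walk.cons h2 q2)).length = q2.length + 2 := by simp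
          omega
        · have hadj : G.Adj u c := hv u c h.symm h2 huc
          have h1 := G.dist_le (Walk.cons hadj q2)
          have hb : (Walk.cons hadj q2).length = q2.length + 1 := by simp
          have h3 : (Walk.cons h (Walk.cons h2 q2)).length = q2.length + 2 := by simp
          omega
    · have hq : q.IsPath := hp.of_cons
      have hql : q.length = G.dist b w' := by
        have h1 : G.dist b w' ≤ q.length := G.dist_le q
        obtain ⟨p', hp', hl'⟩ := q.reachable.exists_path_of_dist
        have h2 := G.dist_le (Walk.cons h p')
        have h3 : (Walk.cons h p').length = p'.length + 1 := by simp
        have h4 : (Walk.cons h q).length = q.length + 1 := by simp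
        omega
      exact ih hvw hq hql hvb hvs

lemma not_mem_stress_of_cliqueNbhd {v : V}
    (hv : ∀ x y, G.Adj v x → G.Adj v y → x ≠ y → G.Adj x y)
    {u w : V} (hvu : v ≠ u) (hvw : v ≠ w) : v ∉ G.stressInterval u w := by
  intro hmem
  obtain ⟨hr, hall⟩ := hmem
  obtain ⟨p, hp, hl⟩ := hr.exists_path_of_dist
  exact aux_not_mem hv hvw p hp hl hvu (hall p hp hl)

lemma extreme_of_cliqueNbhd {v : V}
    (hv : ∀ x y, G.Adj v x → G.Adj v y → x ≠ y → G.Adj x y) : G.IsSExtreme v := by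
  intro a ha b hb z hz
  simp only [Set.mem_compl_iff, Set.mem_singleton_iff] at ha hb ⊢
  rintro rfl
  exact not_mem_stress_of_cliqueNbhd hv (Ne.symm ha) (Ne.symm hb) hz

section Split

variable {K A : Set V} (hcov : K ∪ A = Set.univ) (hKA : Disjoint K A)
  (hK : G.IsClique K) (hA : ∀ a ∈ A, ∀ b ∈ A, ¬ G.Adj a b)

include hcov hK hA

lemma mem_K_or_A (x : V) : x ∈ K ∨ x ∈ A := by
  have : x ∈ K ∪ A := by rw [hcov]; trivial
  exact this

lemma nbhd_clique_of_A {a : V} (ha : a ∈ A) :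
    ∀ x y, G.Adj a x → G.Adj a y → x ≠ y → G.Adj x y := by
  intro x y hax hay hxy
  have hxK : x ∈ K := by
    rcases mem_K_or_A hcov hK hA x with hx | hx
    · exact hx
    · exact absurd hax (hA a ha x hx)
  have hyK : y ∈ K := by
    rcases mem_K_or_A hcov hK hA y with hy | hy
    · exact hy
    · exact absurd hay (hA a ha y hy)
  exact hK hxK hyK hxy

lemma extreme_of_A {a : V} (ha : a ∈ A) : G.IsSExtreme a :=
  extreme_of_cliqueNbhd (nbhd_clique_of_A hcov hK hA ha)

lemma nonadj_nbhrs_of_not_extreme {w : V} (hw : ¬ G.IsSExtreme w) :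
    ∃ x y, G.Adj w x ∧ G.Adj w y ∧ x ≠ y ∧ ¬ G.Adj x y := by
  by_contra hcon
  push_neg at hcon
  exact hw (extreme_of_cliqueNbhd (fun x y h1 h2 h3 => hcon x y h1 h2 h3))

/-- Core case: `u ∈ A`. -/
lemma core {u w v : V} (hu : u ∈ A) (hvu : v ≠ u) (hvw : v ≠ w)
    (hmem : v ∈ G.stressInterval u w) :
    ∃ a b, G.IsSExtreme a ∧ G.IsSExtreme b ∧ v ∈ G.stressInterval a b := by
  have huw : u ≠ w := by
    rintro rfl
    exact hvu (eq_of_mem_stress_self hmem)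
  have hnadj : ¬ G.Adj u w := not_adj_of_mem_stress hmem hvu hvw
  rcases mem_K_or_A hcov hK hA w with hwK | hwA
  swap
  · exact ⟨u, w, extreme_of_A hcov hK hA hu, extreme_of_A hcov hK hA hwA, hmem⟩
  by_cases hwe : G.IsSExtreme w
  · exact ⟨u, w, extreme_of_A hcov hK hA hu, hwe, hmem⟩
  -- N(u) ⊆ {v}
  have hNu : ∀ z, G.Adj u z → z = v := by
    intro z huz
    by_contra hzv
    have hzK : z ∈ K := by
      rcases mem_K_or_A hcov hK hA z with hz | hz
      · exact hz
      · exact absurd huz (hA u hu z hz)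
    have hzw : z ≠ w := fun h => hnadj (h ▸ huz)
    have hadjzw : G.Adj z w := hK hzK hwK hzw
    have hP : (Walk.cons huz (Walk.cons hadjzw Walk.nil)).IsPath := by
      simp [huz.ne, hzw, huw]
    have hlen : (Walk.cons huz (Walk.cons hadjzw Walk.nil)).length = G.dist u w := by
      have h1 : G.dist u w ≤ 2 := by
        have := G.dist_le (Walk.cons huz (Walk.cons hadjzw Walk.nil))
        simpa using this
      have h2 : G.dist u w ≠ 0 := by
        intro h0
        rcases SimpleGraph.dist_eq_zero_iff_eq_or_not_reachable.1 h0 with h | h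
        · exact huw h
        · exact h hmem.1
      have h3 : G.dist u w ≠ 1 := fun h1 => hnadj (SimpleGraph.dist_eq_one_iff_adj.1 h1)
      simp only [Walk.length_cons, Walk.length_nil]
      omega
    have := hmem.2 _ hP hlen
    simp only [Walk.support_cons, Walk.support_nil, List.mem_cons, List.mem_singleton] at this
    rcases this with h | h | h
    · exact hvu h
    · exact hzv h.symm
    · rcases h with h | h
      · exact hvw h
      · simp at h
  -- pick an A-neighbor of w
  obtain ⟨x, y, hwx, hwy, hxy, hnxy⟩ := nonadj_nbhrs_of_not_extreme hcov hK hA hwe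
  have hone : ∃ x, x ∈ A ∧ G.Adj w x := by
    rcases mem_K_or_A hcov hK hA x with hx | hx
    · rcases mem_K_or_A hcov hK hA y with hy | hy
      · exact absurd (hK hx hy hxy) hnxy
      · exact ⟨y, hy, hwy⟩
    · exact ⟨x, hx, hwx⟩
  obtain ⟨x, hxA, hwxadj⟩ := hone
  have hux : u ≠ x := by
    rintro rfl
    exact hnadj hwxadj.symm
  refine ⟨u, x, extreme_of_A hcov hK hA hu, extreme_of_A hcov hK hA hxA, ?_, ?_⟩
  · exact hmem.1.trans hwxadj.reachable
  · intro p hp hl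
    cases p with
    | nil => exact absurd rfl hux
    | cons h q =>
      have := hNu _ h
      subst this
      simp [Walk.support_cons]

lemma main_cover (v : V) :
    ∃ a b, G.IsSExtreme a ∧ G.IsSExtreme b ∧ v ∈ G.stressInterval a b := by
  by_cases hv : G.IsSExtreme v
  · exact ⟨v, v, hv, hv, stress_self G v⟩
  · rw [SimpleGraph.IsSExtreme, SimpleGraph.IsStressConvex] at hv
    push_neg at hv
    obtain ⟨u, hu, w, hw, hns⟩ := hv
    rw [Set.not_subset] at hns
    obtain ⟨z, hz, hz2⟩ := hns
    simp only [Set.mem_compl_iff, Set.mem_singleton_iff, not_not] at hu hw hz2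
    subst hz2
    rcases mem_K_or_A hcov hK hA u with huK | huA
    · rcases mem_K_or_A hcov hK hA w with hwK | hwA
      · -- both in K: contradiction
        exfalso
        have huw : u ≠ w := by
          rintro rfl
          exact hu (eq_of_mem_stress_self hz).symm
        exact not_adj_of_mem_stress hz (Ne.symm hu) (Ne.symm hw)
          (hK huK hwK huw)
      · exact core hcov hK hA hwA (Ne.symm hw) (Ne.symm hu) (stress_symm hz)
    · exact core hcov hK hA huA (Ne.symm hu) (Ne.symm hw) hz

end Split

-- hull basics
lemma subset_stressHull (G : SimpleGraph V) (U : Set V) : U ⊆ G.stressHull U :=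
  fun x hx => Set.mem_sInter.2 fun _ hW => hW.2 hx

lemma stressHull_isConvex (G : SimpleGraph V) (U : Set V) :
    G.IsStressConvex (G.stressHull U) := by
  intro a ha b hb z hz
  refine Set.mem_sInter.2 fun W hW => ?_
  exact hW.1 (Set.mem_sInter.1 ha W hW) (Set.mem_sInter.1 hb W hW) hz

lemma stressHull_subset {U W : Set V} (hW : G.IsStressConvex W) (hUW : U ⊆ W) :
    G.stressHull U ⊆ W :=
  Set.sInter_subset_of_mem ⟨hW, hUW⟩

end SplitAux

/-- if `G` is a split graph (its vertex set is partitioned into a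
clique and an independent set), then `|Ext_s(G)| = sh(G) = sn(G)`. -/
theorem split_graph_extreme_eq_hull_eq_stress {V : Type*} [Fintype V]
    (G : SimpleGraph V)
    (hsplit : ∃ K A : Set V, K ∪ A = Set.univ ∧ Disjoint K A ∧
      G.IsClique K ∧ ∀ a ∈ A, ∀ b ∈ A, ¬ G.Adj a b) :
    {v : V | G.IsSExtreme v}.ncard = G.stressHullNumber ∧
      G.stressHullNumber = G.stressNumber := by
  classical
  obtain ⟨K, A, hcov, hKA, hK, hA⟩ := hsplit
  set E : Set V := {v : V | G.IsSExtreme v} with hE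
  -- E is a stress set
  have hEstress : (⋃ u ∈ E, ⋃ v ∈ E, G.stressInterval u v) = Set.univ := by
    ext v
    simp only [Set.mem_iUnion, Set.mem_univ, iff_true]
    obtain ⟨a, b, ha, hb, hv⟩ := SplitAux.main_cover hcov hK hA v
    exact ⟨a, ha, b, hb, hv⟩
  -- sn ≤ |E|
  have h1 : G.stressNumber ≤ E.ncard := Nat.sInf_le ⟨E, hEstress, rfl⟩
  -- any stress set is a hull set
  have hsub : {n | ∃ U : Set V,
      (⋃ u ∈ U, ⋃ v ∈ U, G.stressInterval u v) = Set.univ ∧ U.ncard = n} ⊆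
      {n | ∃ U : Set V, G.stressHull U = Set.univ ∧ U.ncard = n} := by
    rintro n ⟨U, hU, hcard⟩
    refine ⟨U, ?_, hcard⟩
    apply Set.eq_univ_of_univ_subset
    rw [← hU]
    refine Set.iUnion₂_subset fun u hu => Set.iUnion₂_subset fun w hw => ?_
    exact SplitAux.stressHull_isConvex G U (SplitAux.subset_stressHull G U hu)
      (SplitAux.subset_stressHull G U hw)
  -- sh ≤ sn
  have h2 : G.stressHullNumber ≤ G.stressNumber := by
    have hne : {n | ∃ U : Set V,
        (⋃ u ∈ U, ⋃ v ∈ U, G.stressInterval u v) = Set.univ ∧ U.ncard = n}.Nonempty :=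
      ⟨E.ncard, E, hEstress, rfl⟩
    have := Nat.sInf_mem hne
    exact Nat.sInf_le (hsub this)
  -- |E| ≤ sh
  have h3 : E.ncard ≤ G.stressHullNumber := by
    have hne : {n | ∃ U : Set V, G.stressHull U = Set.univ ∧ U.ncard = n}.Nonempty := by
      refine ⟨Set.univ.ncard, Set.univ, ?_, rfl⟩
      exact Set.eq_univ_of_univ_subset (SplitAux.subset_stressHull G _)
    obtain ⟨U, hU, hcard⟩ := Nat.sInf_mem hne
    rw [SimpleGraph.stressHullNumber, ← hcard]
    refine Set.ncard_le_ncard ?_ U.toFinite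
    intro v hv
    by_contra hvU
    have hconv : G.IsStressConvex {v}ᶜ := hv
    have : G.stressHull U ⊆ {v}ᶜ :=
      SplitAux.stressHull_subset hconv (fun x hx => fun hxv => hvU (hxv ▸ hx))
    rw [hU] at this
    exact (this (Set.mem_univ v)) rfl
  exact ⟨le_antisymm h3 (h2.trans h1), le_antisymm h2 (h1.trans h3)⟩
end
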